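/- arXiv:2407.07228 — 5 statements merged into one kernel-verified Lean document; each statement's English description precedes it below -/
import Mathlib

section
/- For all integers m, n and every natural number s, ∑_{a+b=s, a,b ∈ ℕ} q^{m·b − n·a} [m choose a]_q [n choose b]_q = [m+n choose s]_q in K = ℚ(q) (the q-analogue of the Chu–Vandermonde convolution formula; Lemma 'second'). -/
open scoped BigOperators

/-- The variable `q` in the field `K = ℚ(q)` of rational functions. -/
noncomputable def q : RatFunc ℚ := RatFunc.X

/-- The balanced quantum integer `[n]_q = (q^n − q^{−n})/(q − q⁻¹)`. -/
noncomputable def qint (n : ℤ) : RatFunc ℚ := (q ^ n - q ^ (-n)) / (q - q⁻¹)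

/-- The quantum factorial `[s]_q! = ∏_{i=1}^s [i]_q`. -/
noncomputable def qfact (s : ℕ) : RatFunc ℚ := ∏ i ∈ Finset.range s, qint ((i : ℤ) + 1)

/-- The balanced quantum binomial coefficient
`[m choose s]_q = ([m]_q [m−1]_q ⋯ [m−s+1]_q)/[s]_q!`. -/
noncomputable def qbinom (m : ℤ) (s : ℕ) : RatFunc ℚ :=
  (∏ i ∈ Finset.range s, qint (m - (i : ℤ))) / qfact s

lemma q_ne_zero : q ≠ 0 := RatFunc.X_ne_zero
lemma q_pow_ne_one (j : ℤ) (hj : j ≠ 0) : q ^ j ≠ 1 := by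
  have key : ∀ k : ℕ, k ≠ 0 → q ^ (k : ℤ) ≠ 1 := by
    intro k hk h
    rw [zpow_natCast] at h
    have : (Polynomial.X : Polynomial ℚ) ^ k = 1 := by
      apply RatFunc.algebraMap_injective ℚ
      simpa [q, map_pow, RatFunc.algebraMap_X] using h
    have := congrArg (Polynomial.eval 0) this
    rw [Polynomial.eval_pow, Polynomial.eval_X, Polynomial.eval_one, zero_pow hk] at this; exact zero_ne_one this
  rcases lt_trichotomy j 0 with h | h | h
  · intro he
    have : q ^ (-j) = 1 := by
      rw [zpow_neg, he, inv_one]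
    obtain ⟨k, hk⟩ := Int.eq_ofNat_of_zero_le (le_of_lt (neg_pos.mpr h))
    rw [hk] at this
    exact key k (by omega) this
  · exact absurd h hj
  · obtain ⟨k, hk⟩ := Int.eq_ofNat_of_zero_le (le_of_lt h)
    rw [hk]
    exact key k (by omega)
lemma hD : q - q⁻¹ ≠ 0 := by
  intro h
  have h2 : q ^ (2:ℤ) = 1 := by
    have := sub_eq_zero.mp h
    have : q * q = q * q⁻¹ := by rw [← this]
    rw [mul_inv_cancel₀ q_ne_zero] at this
    rw [show (2:ℤ) = 1+1 by rfl, zpow_add₀ q_ne_zero, zpow_one, this]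
  exact q_pow_ne_one 2 (by norm_num) h2
lemma qint_ne_zero (k : ℤ) (hk : k ≠ 0) : qint k ≠ 0 := by
  unfold qint
  apply div_ne_zero _ hD
  intro h
  have := sub_eq_zero.mp h
  have h2 : q ^ (2 * k) = 1 := by
    rw [two_mul, zpow_add₀ q_ne_zero]
    nth_rewrite 1 [this]
    rw [← zpow_add₀ q_ne_zero, neg_add_cancel, zpow_zero]
  exact q_pow_ne_one (2 * k) (by omega) h2
lemma qfact_ne_zero (s : ℕ) : qfact s ≠ 0 := by
  unfold qfact
  apply Finset.prod_ne_zero_iff.mpr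
  intro i _
  exact qint_ne_zero _ (by omega)
lemma qint_add (a b : ℤ) : qint (a + b) = q ^ (-b) * qint a + q ^ a * qint b := by
  unfold qint
  rw [← mul_div_assoc, ← mul_div_assoc, ← add_div]
  congr 1
  have ha : q ^ a ≠ 0 := zpow_ne_zero a q_ne_zero
  have hb : q ^ b ≠ 0 := zpow_ne_zero b q_ne_zero
  simp only [neg_add, zpow_add₀ q_ne_zero, zpow_neg]
  field_simp
  ring
lemma qfact_succ (s : ℕ) : qfact (s + 1) = qfact s * qint ((s:ℤ) + 1) := by
  unfold qfact
  rw [Finset.prod_range_succ]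
lemma qbinom_pascal (m : ℤ) (s : ℕ) :
    qbinom m (s + 1)
      = q ^ ((s:ℤ) + 1 - m) * qbinom (m-1) s + q ^ ((s:ℤ) + 1) * qbinom (m-1) (s+1) := by
  have h1 : ∏ i ∈ Finset.range (s+1), qint (m - (i:ℤ))
      = (∏ i ∈ Finset.range s, qint (m - 1 - (i:ℤ))) * qint m := by
    rw [Finset.prod_range_succ']
    congr 1
    · apply Finset.prod_congr rfl
      intro i _
      congr 1
      push_cast
      ring
    · norm_num
  have h2 : ∏ i ∈ Finset.range (s+1), qint (m - 1 - (i:ℤ))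
      = (∏ i ∈ Finset.range s, qint (m - 1 - (i:ℤ))) * qint (m - 1 - s) :=
    Finset.prod_range_succ _ _
  have hm : qint m = q ^ ((s:ℤ) + 1 - m) * qint ((s:ℤ) + 1) + q ^ ((s:ℤ) + 1) * qint (m - 1 - s) := by
    have h := qint_add ((s:ℤ) + 1) (m - ((s:ℤ) + 1))
    rw [show (s:ℤ) + 1 + (m - ((s:ℤ)+1)) = m by ring] at h
    rw [h]
    congr 2
    · ring
    · ring
  have hF : qfact s ≠ 0 := qfact_ne_zero s
  have hc : qint ((s:ℤ) + 1) ≠ 0 := qint_ne_zero _ (by omega)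
  unfold qbinom
  rw [h1, h2, qfact_succ, hm]
  field_simp
lemma qbinom_zero (m : ℤ) : qbinom m 0 = 1 := by
  unfold qbinom qfact
  simp
lemma qint_zero : qint 0 = 0 := by
  unfold qint
  simp
lemma qbinom_of_zero (a : ℕ) (ha : a ≠ 0) : qbinom 0 a = 0 := by
  unfold qbinom
  rw [Finset.prod_eq_zero (Finset.mem_range.mpr (Nat.pos_of_ne_zero ha)) (by simpa using qint_zero),
    zero_div]
noncomputable def qS (m n : ℤ) (s : ℕ) : RatFunc ℚ :=
  ∑ p ∈ Finset.HasAntidiagonal.antidiagonal s,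
    q ^ (m * (p.2 : ℤ) - n * (p.1 : ℤ)) * qbinom m p.1 * qbinom n p.2
lemma qS_zero (m n : ℤ) : qS m n 0 = 1 := by
  unfold qS
  rw [Finset.Nat.antidiagonal_zero, Finset.sum_singleton]
  simp [qbinom_zero]
lemma key (m n : ℤ) (s : ℕ) :
    qS (m+1) n (s+1) = q ^ ((s:ℤ) - m - n) * qS m n s + q ^ ((s:ℤ) + 1) * qS m n (s+1) := by
  unfold qS
  have split : ∀ p ∈ Finset.HasAntidiagonal.antidiagonal (s+1),
      q ^ ((m+1) * (p.2:ℤ) - n * (p.1:ℤ)) * qbinom (m+1) p.1 * qbinom n p.2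
      = (if p.1 = 0 then 0 else
          q ^ ((m+1) * (p.2:ℤ) - n * (p.1:ℤ) + (p.1:ℤ) - m - 1) * qbinom m (p.1 - 1) * qbinom n p.2)
        + q ^ ((s:ℤ) + 1) * (q ^ (m * (p.2:ℤ) - n * (p.1:ℤ)) * qbinom m p.1 * qbinom n p.2) := by
    intro p hp
    have hps : p.1 + p.2 = s + 1 := Finset.HasAntidiagonal.mem_antidiagonal.mp hp
    obtain ⟨a, b⟩ := p
    simp only [Prod.fst, Prod.snd] at hps ⊢
    rcases Nat.eq_zero_or_pos a with ha | ha
    · subst ha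
      have hb : b = s + 1 := by omega
      subst hb
      rw [if_pos rfl, qbinom_zero, qbinom_zero,
        show ((m+1) * (((s+1:ℕ)):ℤ) - n * ((0:ℕ):ℤ))
          = ((s:ℤ)+1) + (m * (((s+1:ℕ)):ℤ) - n * ((0:ℕ):ℤ)) by push_cast; ring,
        zpow_add₀ q_ne_zero]
      ring
    · obtain ⟨a', rfl⟩ : ∃ a', a = a' + 1 := ⟨a - 1, by omega⟩
      obtain rfl : s = a' + b := by omega
      rw [if_neg (by omega), qbinom_pascal (m+1) a', add_sub_cancel_right, Nat.add_sub_cancel,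
        show ∀ (E : ℤ) (A B C : RatFunc ℚ), q^E*(A+B)*C = q^E*A*C + q^E*B*C from
          fun _ _ _ _ => by ring]
      congr 1
      · rw [← mul_assoc, ← zpow_add₀ q_ne_zero,
          show ((m+1) * (b:ℤ) - n * (((a'+1:ℕ)):ℤ) + ((a':ℤ)+1-(m+1)))
            = (m+1) * (b:ℤ) - n * (((a'+1:ℕ)):ℤ) + (((a'+1:ℕ)):ℤ) - m - 1 by push_cast; ring]
      · rw [← mul_assoc, ← zpow_add₀ q_ne_zero,
          show ((m+1) * (b:ℤ) - n * (((a'+1:ℕ)):ℤ) + ((a':ℤ)+1))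
            = (((a'+b:ℕ)):ℤ) + 1 + (m * (b:ℤ) - n * (((a'+1:ℕ)):ℤ)) by push_cast; ring,
          zpow_add₀ q_ne_zero]
        ring
  rw [Finset.sum_congr rfl split, Finset.sum_add_distrib, ← Finset.mul_sum]
  congr 1
  rw [Finset.Nat.antidiagonal_succ, Finset.sum_cons, if_pos rfl, zero_add, Finset.sum_map,
    Finset.mul_sum]
  apply Finset.sum_congr rfl
  intro p hp
  have hps : p.1 + p.2 = s := Finset.HasAntidiagonal.mem_antidiagonal.mp hp
  obtain ⟨a, b⟩ := p
  simp only [Function.Embedding.prodMap, Function.Embedding.coeFn_mk, Prod.map, Function.Embedding.refl_apply] at *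
  rw [if_neg (Nat.succ_ne_zero a), Nat.succ_sub_one]
  obtain rfl : s = a + b := hps.symm
  rw [show ((m+1) * (b:ℤ) - n * ((Nat.succ a : ℕ):ℤ) + ((Nat.succ a : ℕ):ℤ) - m - 1)
      = (((a+b:ℕ)):ℤ) - m - n + (m * (b:ℤ) - n * ((a:ℕ):ℤ)) by push_cast; ring,
    zpow_add₀ q_ne_zero]
  ring
lemma pascal' (m n : ℤ) (s : ℕ) :
    qbinom (m+1+n) (s+1)
      = q ^ ((s:ℤ) - m - n) * qbinom (m+n) s + q ^ ((s:ℤ) + 1) * qbinom (m+n) (s+1) := by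
  rw [qbinom_pascal (m+1+n) s, show m+1+n-1 = m+n by ring, show (s:ℤ)+1-(m+1+n) = (s:ℤ)-m-n by ring]
lemma step_up (m n : ℤ) (h : ∀ s, qS m n s = qbinom (m+n) s) :
    ∀ s, qS (m+1) n s = qbinom (m+1+n) s := by
  intro s
  cases s with
  | zero => rw [qS_zero, qbinom_zero]
  | succ s => rw [key, h, h, pascal']
lemma step_down (m n : ℤ) (h : ∀ s, qS (m+1) n s = qbinom (m+1+n) s) :
    ∀ s, qS m n s = qbinom (m+n) s := by
  intro s
  induction s with
  | zero => rw [qS_zero, qbinom_zero]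
  | succ s ih =>
    have h1 := (key m n s).symm.trans (h (s+1))
    rw [ih, pascal'] at h1
    have h2 := add_left_cancel h1
    exact mul_left_cancel₀ (zpow_ne_zero _ q_ne_zero) h2
lemma main (m n : ℤ) : ∀ s, qS m n s = qbinom (m+n) s := by
  induction m using Int.induction_on with
  | zero =>
    intro s
    unfold qS
    rw [Finset.sum_eq_single (0, s)]
    · simp [qbinom_zero]
    · intro p hp hne
      have hps : p.1 + p.2 = s := Finset.HasAntidiagonal.mem_antidiagonal.mp hp
      have : p.1 ≠ 0 := by
        intro h0
        apply hne
        have : p.2 = s := by omega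
        rw [← this, ← h0]
      rw [qbinom_of_zero p.1 this]
      ring
    · intro habs
      exact absurd (Finset.HasAntidiagonal.mem_antidiagonal.mpr (by simp)) habs
  | succ k ih => exact step_up k n ih
  | pred k ih =>
    apply step_down
    intro s
    rw [show (-(k:ℤ)-1)+1 = -(k:ℤ) by ring]
    exact ih s

/-- Lemma `second` (q-Chu–Vandermonde):
`∑_{a+b=s} q^{m·b − n·a} [m choose a]_q [n choose b]_q = [m+n choose s]_q`. -/
theorem second (m n : ℤ) (s : ℕ) :
    ∑ p ∈ Finset.HasAntidiagonal.antidiagonal s,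
      q ^ (m * (p.2 : ℤ) - n * (p.1 : ℤ)) * qbinom m p.1 * qbinom n p.2
      = qbinom (m + n) s := by
  have := main m n s
  unfold qS at this
  exact this
end

section
/- Let A and B be associative unital K-algebras, x a Manin system of size m in A, and y a Manin system of size n in B. Define elements z_{i,j} of A ⊗_K B for 1 ≤ i, j ≤ m+n by: z_{i,j} = x_{i,j} ⊗ 1 if i ≤ m and j ≤ m; z_{i,j} = 1 ⊗ y_{i−m, j−m} if i > m and j > m; and z_{i,j} = 0 otherwise. Then z is a Manin system of size m+n in A ⊗_K B. (This is the relation check establishing the surjective bialgebra homomorphism 𝒪_q(m+n) ↠ 𝒪_q(m) ⊗ 𝒪_q(n) of Lemma 'trump'.) -/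
open scoped BigOperators

open TensorProduct

/-- A *Manin system* of size `n` in an associative unital `ℚ(q)`-algebra `A`: a family
`x i j` satisfying the defining relations of Manin's quantized coordinate algebra
`𝒪_q(n)` of `n × n` matrices. -/
structure IsManinSystem {A : Type*} [Ring A] [Algebra (RatFunc ℚ) A] {n : ℕ}
    (x : Fin n → Fin n → A) : Prop where
  comm : ∀ i j k l : Fin n, i < k → l < j → x i j * x k l = x k l * x i j
  main : ∀ i j k l : Fin n, k < i → l < j →
    x i j * x k l = x k l * x i j - (q - q⁻¹) • (x i l * x k j)
  row : ∀ i j l : Fin n, l < j → x i j * x i l = q⁻¹ • (x i l * x i j)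
  col : ∀ i j k : Fin n, i < k → x i j * x k j = q • (x k j * x i j)

set_option synthInstance.maxHeartbeats 1000000 in
set_option maxHeartbeats 1000000 in
private lemma one_tmul_smul {A B : Type*} [Ring A] [Algebra (RatFunc ℚ) A] [Ring B]
    [Algebra (RatFunc ℚ) B] (c : RatFunc ℚ) (w : B) :
    (1 : A) ⊗ₜ[RatFunc ℚ] (c • w) = c • ((1 : A) ⊗ₜ[RatFunc ℚ] w) :=
  TensorProduct.tmul_smul c 1 w

/-- The relation check establishing the bialgebra homomorphism
`𝒪_q(m+n) ↠ 𝒪_q(m) ⊗ 𝒪_q(n)` of Lemma `trump`: if `x` is a Manin system of size `m`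
in `A` and `y` a Manin system of size `n` in `B`, then the family
`z_{i,j} = x_{i,j} ⊗ 1` (if `i, j ≤ m`), `1 ⊗ y_{i−m,j−m}` (if `i, j > m`), `0` (otherwise)
is a Manin system of size `m + n` in `A ⊗ B`. -/
theorem trump {A B : Type*} [Ring A] [Algebra (RatFunc ℚ) A] [Ring B] [Algebra (RatFunc ℚ) B]
    {m n : ℕ} (x : Fin m → Fin m → A) (y : Fin n → Fin n → B)
    (hx : IsManinSystem x) (hy : IsManinSystem y)
    (z : Fin (m + n) → Fin (m + n) → A ⊗[RatFunc ℚ] B)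
    (hz : ∀ i j : Fin (m + n),
      z i j =
        if hi : (i : ℕ) < m then
          if hj : (j : ℕ) < m then x ⟨i, hi⟩ ⟨j, hj⟩ ⊗ₜ[RatFunc ℚ] 1 else 0
        else
          if hj : (j : ℕ) < m then 0
          else (1 : A) ⊗ₜ[RatFunc ℚ]
            y ⟨(i : ℕ) - m, by have := i.isLt; omega⟩
              ⟨(j : ℕ) - m, by have := j.isLt; omega⟩) :
    IsManinSystem z := by
  constructor
  · intro i j k l hik hlj
    have h1 : (i : ℕ) < k := hik
    have h2 : (l : ℕ) < j := hlj
    rw [hz i j, hz k l]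
    split_ifs <;>
    solve
      | omega
      | simp [Algebra.TensorProduct.tmul_mul_tmul]
      | (simp only [Algebra.TensorProduct.tmul_mul_tmul]
         congr 1
         solve
           | exact hx.comm _ _ _ _ (Fin.mk_lt_mk.mpr (by omega)) (Fin.mk_lt_mk.mpr (by omega))
           | exact hy.comm _ _ _ _ (Fin.mk_lt_mk.mpr (by omega)) (Fin.mk_lt_mk.mpr (by omega)))
  · intro i j k l hki hlj
    have h1 : (k : ℕ) < i := hki
    have h2 : (l : ℕ) < j := hlj
    rw [hz i j, hz k l, hz i l, hz k j]
    split_ifs <;>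
    solve
      | omega
      | simp [Algebra.TensorProduct.tmul_mul_tmul]
      | (simp only [Algebra.TensorProduct.tmul_mul_tmul, mul_one]
         rw [hx.main _ _ _ _ (Fin.mk_lt_mk.mpr (by omega)) (Fin.mk_lt_mk.mpr (by omega)),
           TensorProduct.sub_tmul, TensorProduct.smul_tmul'])
      | (simp only [Algebra.TensorProduct.tmul_mul_tmul, one_mul]
         rw [hy.main _ _ _ _ (Fin.mk_lt_mk.mpr (by omega)) (Fin.mk_lt_mk.mpr (by omega)),
           TensorProduct.tmul_sub, one_tmul_smul])
  · intro i j l hlj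
    have h2 : (l : ℕ) < j := hlj
    rw [hz i j, hz i l]
    split_ifs <;>
    solve
      | omega
      | simp [Algebra.TensorProduct.tmul_mul_tmul]
      | (simp only [Algebra.TensorProduct.tmul_mul_tmul, mul_one]
         rw [hx.row _ _ _ (Fin.mk_lt_mk.mpr (by omega)), TensorProduct.smul_tmul'])
      | (simp only [Algebra.TensorProduct.tmul_mul_tmul, one_mul]
         rw [hy.row _ _ _ (Fin.mk_lt_mk.mpr (by omega)), one_tmul_smul])
  · intro i j k hik
    have h1 : (i : ℕ) < k := hik
    rw [hz i j, hz k j]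
    split_ifs <;>
    solve
      | omega
      | simp [Algebra.TensorProduct.tmul_mul_tmul]
      | (simp only [Algebra.TensorProduct.tmul_mul_tmul, mul_one]
         rw [hx.col _ _ _ (Fin.mk_lt_mk.mpr (by omega)), TensorProduct.smul_tmul'])
      | (simp only [Algebra.TensorProduct.tmul_mul_tmul, one_mul]
         rw [hy.col _ _ _ (Fin.mk_lt_mk.mpr (by omega)), one_tmul_smul])
end

section
/- Assume moreover that q² ≠ −1 in K. Then V ⊗ V is the internal direct sum of the submodules ker(c + q·id) and ker(c − q^{−1}·id); furthermore, ker(c − q^{−1}·id) equals the K-span of the vectors v_j ⊗ v_i + q·v_i ⊗ v_j for 1 ≤ i < j ≤ n together with the vectors v_k ⊗ v_k for 1 ≤ k ≤ n. (This is the eigenspace decomposition of the braiding used to define the quantum exterior algebra.) -/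
set_option maxHeartbeats 1000000


open TensorProduct

/-- The eigenspace decomposition of the braiding `c = c_{V,V}` of the natural module of
quantum `GL_n` (for `q² ≠ −1`): `V ⊗ V` is the internal direct sum of
`ker(c + q·id)` and `ker(c − q^{−1}·id)`, and `ker(c − q^{−1}·id)` is spanned by the
vectors `v_j ⊗ v_i + q·v_i ⊗ v_j` (`i < j`) and `v_k ⊗ v_k`.
Here `V = Fin n → K` with standard basis `v i = Pi.single i 1`. -/
theorem eigenspace_decomposition {K : Type*} [Field K] (q : K) (hq : q ≠ 0)
    (hq2 : q ^ 2 ≠ -1) (n : ℕ) (hn : 1 ≤ n)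
    (c : ((Fin n → K) ⊗[K] (Fin n → K)) →ₗ[K] ((Fin n → K) ⊗[K] (Fin n → K)))
    (hlt : ∀ i j : Fin n, i < j →
      c (Pi.single i (1 : K) ⊗ₜ[K] Pi.single j 1) =
        Pi.single j (1 : K) ⊗ₜ[K] Pi.single i 1)
    (heq : ∀ i : Fin n,
      c (Pi.single i (1 : K) ⊗ₜ[K] Pi.single i 1) =
        q⁻¹ • (Pi.single i (1 : K) ⊗ₜ[K] Pi.single i 1))
    (hgt : ∀ i j : Fin n, j < i →
      c (Pi.single i (1 : K) ⊗ₜ[K] Pi.single j 1) =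
        Pi.single j (1 : K) ⊗ₜ[K] Pi.single i 1 -
          (q - q⁻¹) • (Pi.single i (1 : K) ⊗ₜ[K] Pi.single j 1)) :
    IsCompl (LinearMap.ker (c + q • LinearMap.id))
        (LinearMap.ker (c - q⁻¹ • LinearMap.id)) ∧
    LinearMap.ker (c - q⁻¹ • LinearMap.id) =
      Submodule.span K
        ({x | ∃ i j : Fin n, i < j ∧
            x = Pi.single j (1 : K) ⊗ₜ[K] Pi.single i 1 +
                  q • (Pi.single i (1 : K) ⊗ₜ[K] Pi.single j 1)} ∪
         {x | ∃ k : Fin n, x = Pi.single k (1 : K) ⊗ₜ[K] Pi.single k 1}) := by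
  have hqq : q⁻¹ * q = 1 := inv_mul_cancel₀ hq
  have h1q : 1 + q ^ 2 ≠ 0 := by intro h; apply hq2; linear_combination h
  have hne : q * q + 1 ≠ 0 := by intro h; apply h1q; linear_combination h
  have hq3 : q + q ^ 3 ≠ 0 := by
    intro h
    apply h1q
    have := mul_eq_zero.mp (show q * (1 + q ^ 2) = 0 by linear_combination h)
    tauto
  have hsum : q + q⁻¹ ≠ 0 := by
    intro h
    apply hq2
    field_simp at h
    linear_combination h
  set B := (Pi.basisFun K (Fin n)).tensorProduct (Pi.basisFun K (Fin n)) with hB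
  have hBapp : ∀ p : Fin n × Fin n,
      B p = (Pi.single p.1 (1 : K)) ⊗ₜ[K] (Pi.single p.2 (1 : K)) := by
    intro p
    rw [hB, Module.Basis.tensorProduct_apply', Pi.basisFun_apply, Pi.basisFun_apply]
  set P : ((Fin n → K) ⊗[K] (Fin n → K)) →ₗ[K] ((Fin n → K) ⊗[K] (Fin n → K)) :=
    c + q • LinearMap.id with hP
  set Q : ((Fin n → K) ⊗[K] (Fin n → K)) →ₗ[K] ((Fin n → K) ⊗[K] (Fin n → K)) :=
    c - q⁻¹ • LinearMap.id with hQ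
  -- Hecke relation
  have hecke1 : P ∘ₗ Q = 0 := by
    apply B.ext
    intro p
    obtain ⟨i, j⟩ := p
    rw [hBapp]
    simp only [hP, hQ, LinearMap.comp_apply, LinearMap.sub_apply, LinearMap.add_apply,
      LinearMap.smul_apply, LinearMap.id_apply, map_sub, map_smul, LinearMap.zero_apply]
    rcases lt_trichotomy i j with h | h | h
    · rw [hlt i j h, hgt j i h]
      match_scalars <;> (field_simp; try ring)
    · subst h
      rw [heq i, map_smul, heq i]
      match_scalars <;> (field_simp; try ring)
    · rw [hgt i j h, map_sub, map_smul, hlt j i h, hgt i j h]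
      match_scalars <;> (field_simp; try ring)
  have hecke2 : Q ∘ₗ P = 0 := by
    have hcomm : P ∘ₗ Q =
        Q ∘ₗ P := by
      apply LinearMap.ext
      intro x
      simp only [hP, hQ, LinearMap.comp_apply, LinearMap.sub_apply, LinearMap.add_apply,
        LinearMap.smul_apply, LinearMap.id_apply, map_sub, map_add, map_smul]
      module
    rw [← hcomm, hecke1]
  have hecke1' : ∀ x : (Fin n → K) ⊗[K] (Fin n → K),
      P (Q x) = 0 := by
    intro x
    have := LinearMap.congr_fun hecke1 x
    simpa only [LinearMap.comp_apply, LinearMap.zero_apply] using this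
  have hecke2' : ∀ x : (Fin n → K) ⊗[K] (Fin n → K),
      Q (P x) = 0 := by
    intro x
    have := LinearMap.congr_fun hecke2 x
    simpa only [LinearMap.comp_apply, LinearMap.zero_apply] using this
  have hdisj : Disjoint (LinearMap.ker P)
      (LinearMap.ker Q) := by
    rw [Submodule.disjoint_def]
    intro x hx1 hx2
    rw [LinearMap.mem_ker] at hx1 hx2
    have h1 : c x + q • x = 0 := by simpa [hP] using hx1
    have h2 : c x - q⁻¹ • x = 0 := by simpa [hQ] using hx2
    have h3 : (q + q⁻¹) • x = 0 := by
      linear_combination (norm := module) h1 - h2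
    rcases smul_eq_zero.mp h3 with h | h
    · exact absurd h hsum
    · exact h
  have hcodisj : Codisjoint (LinearMap.ker P)
      (LinearMap.ker Q) := by
    rw [codisjoint_iff, eq_top_iff]
    intro x _
    have hx : x = (-(q + q⁻¹)⁻¹ • Q x) + ((q + q⁻¹)⁻¹ • P x) := by
      simp only [hP, hQ, LinearMap.sub_apply, LinearMap.add_apply, LinearMap.smul_apply,
        LinearMap.id_apply]
      match_scalars <;> (rw [← sub_eq_zero]; try field_simp [h1q, hq3, hne, hq]; try ring) <;>
        linear_combination (-1 : K) * inv_mul_cancel₀ h1q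
    rw [hx]
    apply Submodule.add_mem
    · apply Submodule.mem_sup_left
      rw [LinearMap.mem_ker, map_smul, hecke1' x, smul_zero]
    · apply Submodule.mem_sup_right
      rw [LinearMap.mem_ker, map_smul, hecke2' x, smul_zero]
  refine ⟨⟨hdisj, hcodisj⟩, ?_⟩
  set S : Set ((Fin n → K) ⊗[K] (Fin n → K)) :=
      ({x | ∃ i j : Fin n, i < j ∧
            x = Pi.single j (1 : K) ⊗ₜ[K] Pi.single i 1 +
                  q • (Pi.single i (1 : K) ⊗ₜ[K] Pi.single j 1)} ∪
         {x | ∃ k : Fin n, x = Pi.single k (1 : K) ⊗ₜ[K] Pi.single k 1}) with hS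
  apply le_antisymm
  · -- ker ⊆ span
    have hgen : ∀ p : Fin n × Fin n, P (B p) ∈ Submodule.span K S := by
      intro p
      rw [hBapp]
      obtain ⟨i, j⟩ := p
      simp only [hP, LinearMap.add_apply, LinearMap.smul_apply, LinearMap.id_apply]
      rcases lt_trichotomy i j with h | h | h
      · rw [hlt i j h]
        exact Submodule.subset_span (Or.inl ⟨i, j, h, rfl⟩)
      · subst h
        rw [heq i]
        have : q⁻¹ • ((Pi.single i (1:K) : Fin n → K) ⊗ₜ[K] (Pi.single i (1:K) : Fin n → K)) +
            q • ((Pi.single i (1:K) : Fin n → K) ⊗ₜ[K] (Pi.single i (1:K) : Fin n → K)) =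
            (q⁻¹ + q) • ((Pi.single i (1:K) : Fin n → K) ⊗ₜ[K] (Pi.single i (1:K) : Fin n → K)) := by
          module
        rw [this]
        exact Submodule.smul_mem _ _ (Submodule.subset_span (Or.inr ⟨i, rfl⟩))
      · rw [hgt i j h]
        have : (Pi.single j (1:K) : Fin n → K) ⊗ₜ[K] (Pi.single i (1:K) : Fin n → K) -
            (q - q⁻¹) • ((Pi.single i (1:K) : Fin n → K) ⊗ₜ[K] (Pi.single j (1:K) : Fin n → K)) +
            q • ((Pi.single i (1:K) : Fin n → K) ⊗ₜ[K] (Pi.single j (1:K) : Fin n → K)) =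
            q⁻¹ • ((Pi.single i (1:K) : Fin n → K) ⊗ₜ[K] (Pi.single j (1:K) : Fin n → K) +
              q • ((Pi.single j (1:K) : Fin n → K) ⊗ₜ[K] (Pi.single i (1:K) : Fin n → K))) := by
          match_scalars <;> (field_simp; try ring)
        rw [this]
        exact Submodule.smul_mem _ _ (Submodule.subset_span (Or.inl ⟨j, i, h, rfl⟩))
    have hrange : LinearMap.range P ≤ Submodule.span K S := by
      rw [LinearMap.range_eq_map, ← B.span_eq, Submodule.map_span, Submodule.span_le]
      rintro _ ⟨_, ⟨p, rfl⟩, rfl⟩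
      exact hgen p
    intro x hx
    rw [LinearMap.mem_ker] at hx
    have hcx : c x = q⁻¹ • x := by
      have : c x - q⁻¹ • x = 0 := by simpa [hQ] using hx
      linear_combination (norm := module) this
    have hx' : x = (q + q⁻¹)⁻¹ • (P x) := by
      simp only [hP, LinearMap.add_apply, LinearMap.smul_apply, LinearMap.id_apply, hcx]
      match_scalars <;> (rw [← sub_eq_zero]; try field_simp [h1q, hq3, hne, hq]; try ring) <;>
        linear_combination (-1 : K) * inv_mul_cancel₀ h1q
    rw [hx']
    exact Submodule.smul_mem _ _ (hrange ⟨x, rfl⟩)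
  · -- span ⊆ ker
    rw [Submodule.span_le]
    rintro x (⟨i, j, h, rfl⟩ | ⟨k, rfl⟩)
    · rw [SetLike.mem_coe, LinearMap.mem_ker]
      simp only [hQ, LinearMap.sub_apply, LinearMap.smul_apply, LinearMap.id_apply,
        map_add, map_smul]
      rw [hgt j i h, hlt i j h]
      match_scalars <;> (field_simp; try ring)
    · rw [SetLike.mem_coe, LinearMap.mem_ker]
      simp only [hQ, LinearMap.sub_apply, LinearMap.smul_apply, LinearMap.id_apply]
      rw [heq k]
      module
end

section
/- Let λ and μ be compositions of r, let C be an (S_λ, S_μ)-double coset in S_r, and let d ∈ C be an element of minimal length. For 1 ≤ i ≤ ℓ(λ) and 1 ≤ j ≤ ℓ(μ) set a_{i,j} = |B^λ_i ∩ d(B^μ_j)|. Let μ⁺ be the composition of r with ℓ(λ)·ℓ(μ) parts obtained from μ by replacing each part μ_j by the sequence (a_{1,j}, a_{2,j}, …, a_{ℓ(λ),j}) (reading the matrix (a_{i,j}) down columns, leftmost column first), and let λ⁻ be the composition obtained from λ by replacing each part λ_i by (a_{i,1}, …, a_{i,ℓ(μ)}) (reading along rows, top row first). Then: (i) (S_λ·d)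 ∩ (d·S_μ) = d·S_{μ⁺} = S_{λ⁻}·d; (ii) every w ∈ C can be written uniquely as w = x·d·y with x ∈ S_λ and y ∈ S_μ of minimal length in the right coset S_{μ⁺}·y, and likewise uniquely as w = x·d·y with x ∈ S_λ of minimal length in the left coset x·S_{λ⁻} and y ∈ S_μ; and in both factorizations ℓ(w) = ℓ(x) + ℓ(d) + ℓ(y). In particular, d is the unique element of C of minimal length. (Lemma 'doso'.) -/
open scoped Pointwise

/-- The length of a permutation: its number of inversions. -/
def len {r : ℕ} (w : Equiv.Perm (Fin r)) : ℕ :=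
  (Finset.univ.filter fun p : Fin r × Fin r => p.1 < p.2 ∧ w p.2 < w p.1).card

/-- The `i`-th block (0-indexed) of the composition `l` of `r`: the consecutive interval
of `{0, …, r−1}` of size `l.get i` starting at `(l.take i).sum`. -/
def blockF (r : ℕ) (l : List ℕ) (i : ℕ) : Finset (Fin r) :=
  Finset.univ.filter fun k => (l.take i).sum ≤ (k : ℕ) ∧ (k : ℕ) < (l.take (i + 1)).sum

/-- The Young (parabolic) subgroup `S_λ` of `S_r`: permutations stabilizing each block. -/
def young (r : ℕ) (l : List ℕ) : Subgroup (Equiv.Perm (Fin r)) :=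
  ⨅ i : Fin l.length, MulAction.stabilizer (Equiv.Perm (Fin r)) (blockF r l (i : ℕ))

/-- The entry `a_{i,j} = |B^λ_i ∩ w(B^μ_j)|`. -/
def aEntry (r : ℕ) (lam mu : List ℕ) (w : Equiv.Perm (Fin r)) (i j : ℕ) : ℕ :=
  (blockF r lam i ∩ (blockF r mu j).image w).card

/-- The `(S_λ, S_μ)`-double coset of `d` in `S_r`. -/
def dcoset (r : ℕ) (lam mu : List ℕ) (d : Equiv.Perm (Fin r)) : Set (Equiv.Perm (Fin r)) :=
  {w | ∃ u ∈ young r lam, ∃ v ∈ young r mu, w = u * d * v}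

/-- The composition `μ⁺`: the entries of the matrix `(a_{i,j})` read down columns. -/
def muPlus (r : ℕ) (lam mu : List ℕ) (d : Equiv.Perm (Fin r)) : List ℕ :=
  (List.range mu.length).flatMap fun j =>
    (List.range lam.length).map fun i => aEntry r lam mu d i j

/-- The composition `λ⁻`: the entries of the matrix `(a_{i,j})` read along rows. -/
def lamMinus (r : ℕ) (lam mu : List ℕ) (d : Equiv.Perm (Fin r)) : List ℕ :=
  (List.range lam.length).flatMap fun i =>
    (List.range mu.length).map fun j => aEntry r lam mu d i j

namespace Doso
variable {r : ℕ}

def Inv (w : Equiv.Perm (Fin r)) : Finset (Fin r × Fin r) :=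
  Finset.univ.filter fun p => p.1 < p.2 ∧ w p.2 < w p.1

lemma len_eq (w : Equiv.Perm (Fin r)) : len w = (Inv w).card := rfl

lemma mem_Inv {w : Equiv.Perm (Fin r)} {p : Fin r × Fin r} :
    p ∈ Inv w ↔ p.1 < p.2 ∧ w p.2 < w p.1 := by simp [Inv]

lemma len_inv (w : Equiv.Perm (Fin r)) : len w⁻¹ = len w := by
  rw [len_eq, len_eq]
  apply Finset.card_nbij (fun p => (w⁻¹ p.2, w⁻¹ p.1))
  · intro p hp
    rw [Finset.mem_coe, mem_Inv] at hp ⊢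
    simpa using hp.symm
  · intro p _ q _ h
    simp only [Prod.mk.injEq, EmbeddingLike.apply_eq_iff_eq] at h
    exact Prod.ext h.2 h.1
  · intro p hp
    rw [Finset.mem_coe, mem_Inv] at hp
    refine ⟨(w p.2, w p.1), ?_, by simp⟩
    rw [Finset.mem_coe, mem_Inv]
    simpa using hp.symm

lemma len_one : len (1 : Equiv.Perm (Fin r)) = 0 := by
  rw [len_eq, Finset.card_eq_zero]
  ext p
  simp only [mem_Inv, Finset.notMem_empty, iff_false]
  rintro ⟨h1, h2⟩
  simp only [Equiv.Perm.one_apply] at h2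
  exact absurd h1 (not_lt.2 h2.le)

lemma eq_one_of_len_eq_zero {w : Equiv.Perm (Fin r)} (h : len w = 0) : w = 1 := by
  have hmono : StrictMono w := by
    intro i j hij
    rcases lt_trichotomy (w i) (w j) with h' | h' | h'
    · exact h'
    · exact absurd (w.injective h') hij.ne
    · exfalso
      rw [len_eq, Finset.card_eq_zero] at h
      have : (i, j) ∈ Inv w := mem_Inv.2 ⟨hij, h'⟩
      simp [h] at this
  have hr : Set.range w = Set.range (id : Fin r → Fin r) := by
    simp [w.surjective.range_eq]
  haveI : WellFoundedLT (Fin r) := ⟨(Finite.to_wellFoundedLT (α := Fin r)).wf⟩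
  have := (StrictMono.range_inj (β := Fin r) (γ := Fin r) hmono (strictMono_id (α := Fin r))).1 hr
  ext x
  exact congrArg Fin.val (by simpa using congrFun this x)

/-- key multiplicativity: if `u` does not undo any inversion of `v`, lengths add. -/
lemma len_mul (u v : Equiv.Perm (Fin r))
    (h : ∀ i j : Fin r, i < j → v j < v i → u (v j) < u (v i)) :
    len (u * v) = len u + len v := by
  have hsub : Inv v ⊆ Inv (u * v) := by
    intro p hp
    rw [mem_Inv] at hp ⊢
    exact ⟨hp.1, h p.1 p.2 hp.1 hp.2⟩
  have hcard : (Inv (u * v)).card = (Inv (u*v) \ Inv v).card + (Inv v).card := by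
    rw [Finset.card_sdiff_of_subset hsub]
    have := Finset.card_le_card hsub
    omega
  have h2 : (Inv (u*v) \ Inv v).card = (Inv u).card := by
    apply Finset.card_nbij (fun p => (v p.1, v p.2))
    · intro p hp
      simp only [Finset.mem_coe, Finset.mem_sdiff, mem_Inv, Equiv.Perm.mul_apply] at hp
      obtain ⟨⟨h1, h2⟩, h3⟩ := hp
      rw [Finset.mem_coe, mem_Inv]
      refine ⟨?_, h2⟩
      rcases lt_trichotomy (v p.1) (v p.2) with h' | h' | h'
      · exact h'
      · exact absurd (v.injective h') h1.ne
      · exact absurd h' (by simpa [mem_Inv] using fun hh => h3 ⟨h1, hh⟩)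
    · intro p _ q _ hpq
      simp only [Prod.mk.injEq, EmbeddingLike.apply_eq_iff_eq] at hpq
      exact Prod.ext hpq.1 hpq.2
    · rintro ⟨a, b⟩ hab
      rw [Finset.mem_coe, mem_Inv] at hab
      obtain ⟨hab1, hab2⟩ := hab
      simp only at hab1 hab2
      have hv1 : v⁻¹ a < v⁻¹ b := by
        rcases lt_trichotomy (v⁻¹ a) (v⁻¹ b) with h' | h' | h'
        · exact h'
        · exact absurd (congrArg v h') (by simpa using hab1.ne)
        · exfalso
          have := h _ _ h' (by simpa using hab1)
          simp only [Equiv.Perm.coe_inv, Equiv.apply_symm_apply] at this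
          exact absurd hab2 (not_lt.2 this.le)
      refine ⟨(v⁻¹ a, v⁻¹ b), ?_, by simp⟩
      simp only [Finset.coe_sdiff, Set.mem_diff, Finset.mem_coe, mem_Inv,
        Equiv.Perm.mul_apply, Equiv.Perm.coe_inv, Equiv.apply_symm_apply]
      refine ⟨⟨hv1, hab2⟩, ?_⟩
      rintro ⟨-, hlt⟩
      exact absurd hab1 (not_lt.2 hlt.le)
  rw [len_eq, len_eq, len_eq, hcard, h2]

-- CHUNK2
lemma swap_adj_lt {k k' : Fin r} (hkk : (k:ℕ)+1 = (k':ℕ)) {i j : Fin r}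
    (hij : i < j) (hne : ¬(i = k ∧ j = k')) :
    Equiv.swap k k' i < Equiv.swap k k' j := by
  have h1 : ∀ a b : Fin r, a = b ↔ (a:ℕ) = (b:ℕ) := fun a b => Fin.ext_iff
  rw [Fin.lt_def] at hij ⊢
  rw [Equiv.swap_apply_def, Equiv.swap_apply_def]
  split_ifs <;> simp only [h1] at * <;> omega

lemma len_mul_swap {w : Equiv.Perm (Fin r)} {k k' : Fin r} (hkk : (k:ℕ)+1 = (k':ℕ))
    (hw : w k' < w k) : len (w * Equiv.swap k k') + 1 = len w := by
  set s := Equiv.swap k k' with hs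
  have hklt : k < k' := by rw [Fin.lt_def]; omega
  have hmem : (k, k') ∈ Inv w := mem_Inv.2 ⟨hklt, hw⟩
  have hcard : (Inv (w * s)).card = ((Inv w).erase (k, k')).card := by
    apply Finset.card_nbij (fun p => (s p.1, s p.2))
    · intro p hp
      rw [Finset.mem_coe] at hp ⊢
      rw [mem_Inv] at hp
      obtain ⟨h1, h2⟩ := hp
      simp only [Equiv.Perm.mul_apply] at h2
      have hne : ¬(p.1 = k ∧ p.2 = k') := by
        rintro ⟨rfl, rfl⟩
        rw [hs, Equiv.swap_apply_left, Equiv.swap_apply_right] at h2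
        exact absurd hw (not_lt.2 h2.le)
      refine Finset.mem_erase.2 ⟨?_, mem_Inv.2 ⟨swap_adj_lt hkk h1 hne, h2⟩⟩
      rintro hEq
      have e1 : s p.1 = k := congrArg Prod.fst hEq
      have e2 : s p.2 = k' := congrArg Prod.snd hEq
      have : p.1 = k' := by
        have := congrArg s e1
        simpa [hs, Equiv.swap_apply_left] using this
      have : p.2 = k := by
        have := congrArg s e2
        simpa [hs, Equiv.swap_apply_right] using this
      rw [‹p.1 = k'›, this] at h1
      exact absurd hklt (not_lt.2 h1.le)
    · intro p _ q _ hpq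
      simp only [Prod.mk.injEq, EmbeddingLike.apply_eq_iff_eq] at hpq
      exact Prod.ext hpq.1 hpq.2
    · rintro ⟨a, b⟩ hab
      rw [Finset.mem_coe, Finset.mem_erase] at hab
      obtain ⟨hne, hab⟩ := hab
      rw [mem_Inv] at hab
      obtain ⟨h1, h2⟩ := hab
      simp only at h1 h2
      have hne' : ¬(a = k ∧ b = k') := by
        rintro ⟨rfl, rfl⟩
        exact hne rfl
      refine ⟨(s a, s b), ?_, by simp [hs]⟩
      rw [Finset.mem_coe, mem_Inv]
      constructor
      · exact swap_adj_lt hkk h1 hne'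
      · simpa [hs, Equiv.Perm.mul_apply] using h2
  rw [len_eq, len_eq, hcard, Finset.card_erase_of_mem hmem]
  have : 0 < (Inv w).card := Finset.card_pos.2 ⟨_, hmem⟩
  omega

section Blocks
variable {l : List ℕ}

lemma mem_blockF {i : ℕ} {x : Fin r} :
    x ∈ blockF r l i ↔ (l.take i).sum ≤ (x:ℕ) ∧ (x:ℕ) < (l.take (i+1)).sum := by
  simp [blockF]

lemma take_sum_mono (l : List ℕ) {i j : ℕ} (h : i ≤ j) :
    (l.take i).sum ≤ (l.take j).sum := by
  conv_rhs => rw [← List.take_append_drop i (l.take j)]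
  rw [List.sum_append, List.take_take, Nat.min_eq_left h]
  omega

lemma blockF_lt {i j : ℕ} (hij : i < j) {x y : Fin r}
    (hx : x ∈ blockF r l i) (hy : y ∈ blockF r l j) : x < y := by
  rw [mem_blockF] at hx hy
  have := take_sum_mono l (show i+1 ≤ j from hij)
  rw [Fin.lt_def]
  omega

lemma blockF_disjoint {i j : ℕ} (hij : i ≠ j) {x : Fin r}
    (hx : x ∈ blockF r l i) (hy : x ∈ blockF r l j) : False := by
  rcases hij.lt_or_gt with h | h
  · exact lt_irrefl x (blockF_lt h hx hy)
  · exact lt_irrefl x (blockF_lt h hy hx)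

lemma exists_take_sum {n : ℕ} : ∀ (l : List ℕ), n < l.sum →
    ∃ i < l.length, (l.take i).sum ≤ n ∧ n < (l.take (i+1)).sum := by
  intro l
  induction l generalizing n with
  | nil => simp
  | cons a t ih =>
    intro hn
    by_cases hna : n < a
    · exact ⟨0, by simp, by simp, by simpa using hna⟩
    · rw [List.sum_cons] at hn
      obtain ⟨i, hi, h1, h2⟩ := ih (n := n - a) (by omega)
      refine ⟨i + 1, by simpa using hi, ?_, ?_⟩
      · simpa using by omega
      · simp only [List.take_succ_cons, List.sum_cons]
        omega

lemma exists_blockF (hl : l.sum = r) (x : Fin r) :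
    ∃ i < l.length, x ∈ blockF r l i := by
  obtain ⟨i, hi, h1, h2⟩ := exists_take_sum l (by rw [hl]; exact x.2)
  exact ⟨i, hi, mem_blockF.2 ⟨h1, h2⟩⟩

lemma card_blockF (hl : l.sum = r) (i : ℕ) :
    (blockF r l i).card = (l.take (i+1)).sum - (l.take i).sum := by
  have hb : (l.take (i+1)).sum ≤ r := by
    rw [← hl]
    conv_rhs => rw [← List.take_append_drop (i+1) l]
    rw [List.sum_append]
    omega
  rw [show (l.take (i+1)).sum - (l.take i).sum =
    (Finset.Ico ((l.take i).sum) ((l.take (i+1)).sum)).card by rw [Nat.card_Ico]]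
  refine Finset.card_nbij (fun x => (x : ℕ)) ?_ ?_ ?_
  · intro x hx
    rw [Finset.mem_coe, mem_blockF] at hx
    exact Finset.mem_Ico.2 hx
  · intro x _ y _ h
    exact Fin.ext h
  · intro n hn
    rw [Finset.mem_coe, Finset.mem_Ico] at hn
    exact ⟨⟨n, lt_of_lt_of_le hn.2 hb⟩, by rw [Finset.mem_coe, mem_blockF]; exact hn, rfl⟩

lemma mem_young_iff {w : Equiv.Perm (Fin r)} :
    w ∈ young r l ↔ ∀ i < l.length, ∀ x ∈ blockF r l i, w x ∈ blockF r l i := by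
  rw [young, Subgroup.mem_iInf]
  constructor
  · intro h i hi x hx
    have := h ⟨i, hi⟩
    rw [MulAction.mem_stabilizer_iff] at this
    rw [← this]
    rw [Finset.mem_smul_finset]
    exact ⟨x, hx, rfl⟩
  · intro h i
    rw [MulAction.mem_stabilizer_iff]
    apply Finset.eq_of_subset_of_card_le
    · intro y hy
      rw [Finset.mem_smul_finset] at hy
      obtain ⟨x, hx, rfl⟩ := hy
      exact h i i.2 x hx
    · rw [Finset.card_smul_finset]

def SameBlock (l : List ℕ) (a b : Fin r) : Prop :=
  ∃ i < l.length, a ∈ blockF r l i ∧ b ∈ blockF r l i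

lemma young_lt (hl : l.sum = r) {w : Equiv.Perm (Fin r)} (hw : w ∈ young r l)
    {a b : Fin r} (hab : a < b) (hdiff : ¬ SameBlock l a b) : w a < w b := by
  obtain ⟨i, hi, ha⟩ := exists_blockF hl a
  obtain ⟨j, hj, hb⟩ := exists_blockF hl b
  have hij : i ≠ j := fun h => hdiff ⟨i, hi, ha, h ▸ hb⟩
  have hij' : i < j := by
    rcases hij.lt_or_gt with h | h
    · exact h
    · exact absurd (blockF_lt h hb ha) (not_lt.2 hab.le)
  exact blockF_lt hij' (mem_young_iff.1 hw i hi a ha) (mem_young_iff.1 hw j hj b hb)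

lemma swap_mem_young {k k' : Fin r} (hkk : (k:ℕ)+1 = (k':ℕ))
    (hsb : SameBlock l k k') : Equiv.swap k k' ∈ young r l := by
  obtain ⟨m, hm, hkm, hk'm⟩ := hsb
  rw [mem_young_iff]
  intro i hi x hx
  rcases eq_or_ne x k with rfl | hxk
  · rw [Equiv.swap_apply_left]
    rcases eq_or_ne i m with rfl | him
    · exact hk'm
    · exact absurd hkm (fun h => blockF_disjoint him hx h)
  rcases eq_or_ne x k' with rfl | hxk'
  · rw [Equiv.swap_apply_right]
    rcases eq_or_ne i m with rfl | him
    · exact hkm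
    · exact absurd hk'm (fun h => blockF_disjoint him hx h)
  · rw [Equiv.swap_apply_of_ne_of_ne hxk hxk']
    exact hx

/-- extend adjacent monotonicity within blocks to full monotonicity -/
lemma mono_of_adj (f : Fin r → Fin r)
    (hadj : ∀ k k' : Fin r, (k:ℕ)+1 = (k':ℕ) → SameBlock l k k' → f k < f k') :
    ∀ a b : Fin r, SameBlock l a b → a < b → f a < f b := by
  have key : ∀ n : ℕ, ∀ a b : Fin r, SameBlock l a b → (b:ℕ) = (a:ℕ) + n + 1 → f a < f b := by
    intro n
    induction n with
    | zero =>
      intro a b hsb h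
      exact hadj a b (by omega) hsb
    | succ m ih =>
      intro a b hsb h
      obtain ⟨i, hi, ha, hb⟩ := hsb
      have hc : ((a:ℕ) + 1) < r := by omega
      set c : Fin r := ⟨(a:ℕ) + 1, hc⟩ with hcdef
      have hcmem : c ∈ blockF r l i := by
        rw [mem_blockF] at ha hb ⊢
        simp only [hcdef]
        omega
      have h1 : f a < f c := hadj a c (by simp [hcdef]) ⟨i, hi, ha, hcmem⟩
      have h2 : f c < f b := ih c b ⟨i, hi, hcmem, hb⟩ (by simp [hcdef]; omega)
      exact h1.trans h2
  intro a b hsb hab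
  rw [Fin.lt_def] at hab
  exact key ((b:ℕ) - (a:ℕ) - 1) a b hsb (by omega)

end Blocks

-- CHUNK3
section Slice
variable {r : ℕ}

lemma card_fin_interval {I : Finset (Fin r)} {aLo bHi : ℕ} (hb : bHi ≤ r)
    (hI : ∀ x : Fin r, x ∈ I ↔ aLo ≤ (x:ℕ) ∧ (x:ℕ) < bHi) :
    I.card = bHi - aLo := by
  rw [← Nat.card_Ico aLo bHi]
  refine Finset.card_nbij (fun x => (x : ℕ)) ?_ ?_ ?_
  · intro x hx
    exact Finset.mem_Ico.2 ((hI x).1 hx)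
  · intro x _ y _ h
    exact Fin.ext h
  · intro m hm
    rw [Finset.mem_coe, Finset.mem_Ico] at hm
    exact ⟨⟨m, lt_of_lt_of_le hm.2 hb⟩, by rw [Finset.mem_coe, hI]; exact hm, rfl⟩

lemma slice {f : Equiv.Perm (Fin r)} {I : Finset (Fin r)} {aLo bHi : ℕ}
    (hI : ∀ x : Fin r, x ∈ I ↔ aLo ≤ (x:ℕ) ∧ (x:ℕ) < bHi)
    (hmono : ∀ x y : Fin r, x ∈ I → y ∈ I → x < y → f x < f y)
    {P : ℕ → Finset (Fin r)} {n : ℕ}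
    (hcover : ∀ z ∈ I.image f, ∃ i < n, z ∈ P i)
    (hPsub : ∀ i < n, ∀ z ∈ P i, z ∈ I.image f)
    (hord : ∀ i j : ℕ, i < j → ∀ x ∈ P i, ∀ y ∈ P j, x < y) :
    ∀ x ∈ I, ∀ i < n,
      (f x ∈ P i ↔ aLo + (∑ i' ∈ Finset.range i, (P i').card) ≤ (x:ℕ) ∧
        (x:ℕ) < aLo + (∑ i' ∈ Finset.range (i+1), (P i').card)) := by
  have hdisj : ∀ i j : ℕ, i ≠ j → ∀ z : Fin r, z ∈ P i → z ∈ P j → False := by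
    intro i j hij z hzi hzj
    rcases hij.lt_or_gt with h | h
    · exact lt_irrefl z (hord i j h z hzi z hzj)
    · exact lt_irrefl z (hord j i h z hzj z hzi)
  have forward : ∀ x ∈ I, ∀ i < n, f x ∈ P i →
      aLo + (∑ i' ∈ Finset.range i, (P i').card) ≤ (x:ℕ) ∧
        (x:ℕ) < aLo + (∑ i' ∈ Finset.range (i+1), (P i').card) := by
    intro x hx i hi hfx
    obtain ⟨hxlo, hxhi⟩ := (hI x).1 hx
    have step1 : (I.filter (fun y => y < x)).card = (x:ℕ) - aLo := by
      apply card_fin_interval (bHi := (x:ℕ)) (le_of_lt x.2)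
      intro y
      rw [Finset.mem_filter, hI, Fin.lt_def]
      omega
    have step2 : (I.filter (fun y => y < x)).image f = (I.image f).filter (fun z => z < f x) := by
      ext z
      simp only [Finset.mem_image, Finset.mem_filter]
      constructor
      · rintro ⟨y, ⟨hyI, hyx⟩, rfl⟩
        exact ⟨⟨y, hyI, rfl⟩, hmono y x hyI hx hyx⟩
      · rintro ⟨⟨y, hyI, rfl⟩, hlt⟩
        refine ⟨y, ⟨hyI, ?_⟩, rfl⟩
        rcases lt_trichotomy y x with h | rfl | h
        · exact h
        · exact absurd hlt (lt_irrefl _)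
        · exact absurd hlt (not_lt.2 (hmono x y hx hyI h).le)
    have stepc : ((I.image f).filter (fun z => z < f x)).card = (x:ℕ) - aLo := by
      rw [← step2, Finset.card_image_of_injective _ f.injective, step1]
    have hbU : ∀ m : ℕ, ((Finset.range m).biUnion P).card = ∑ i' ∈ Finset.range m, (P i').card := by
      intro m
      apply Finset.card_biUnion
      intro i1 _ i2 _ h12
      rw [Function.onFun, Finset.disjoint_left]
      intro z hz1 hz2
      exact hdisj i1 i2 h12 z hz1 hz2
    have lower : (∑ i' ∈ Finset.range i, (P i').card) ≤ (x:ℕ) - aLo := by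
      rw [← stepc, ← hbU i]
      apply Finset.card_le_card
      intro z hz
      rw [Finset.mem_biUnion] at hz
      obtain ⟨i', hi', hz⟩ := hz
      rw [Finset.mem_range] at hi'
      rw [Finset.mem_filter]
      exact ⟨hPsub i' (hi'.trans hi) z hz, hord i' i hi' z hz (f x) hfx⟩
    have upper : (x:ℕ) - aLo + 1 ≤ ∑ i' ∈ Finset.range (i+1), (P i').card := by
      have hsub : (I.image f).filter (fun z => z < f x) ⊆
          ((Finset.range (i+1)).biUnion P).erase (f x) := by
        intro z hz
        rw [Finset.mem_filter] at hz
        obtain ⟨hzim, hzlt⟩ := hz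
        obtain ⟨i'', hi'', hz''⟩ := hcover z hzim
        have hle : i'' ≤ i := by
          by_contra h
          push_neg at h
          exact absurd hzlt (not_lt.2 (hord i i'' h (f x) hfx z hz'').le)
        refine Finset.mem_erase.2 ⟨hzlt.ne, Finset.mem_biUnion.2 ⟨i'', ?_, hz''⟩⟩
        rw [Finset.mem_range]
        omega
      have hfxmem : f x ∈ (Finset.range (i+1)).biUnion P :=
        Finset.mem_biUnion.2 ⟨i, Finset.mem_range.2 (by omega), hfx⟩
      have := Finset.card_le_card hsub
      rw [Finset.card_erase_of_mem hfxmem, hbU (i+1)] at this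
      have hpos : 0 < ((Finset.range (i+1)).biUnion P).card := Finset.card_pos.2 ⟨_, hfxmem⟩
      rw [hbU (i+1)] at hpos
      rw [stepc] at this
      omega
    omega
  intro x hx i hi
  constructor
  · exact forward x hx i hi
  · rintro ⟨h1, h2⟩
    obtain ⟨i'', hi'', hmem⟩ := hcover (f x) (Finset.mem_image_of_mem f hx)
    obtain ⟨h1', h2'⟩ := forward x hx i'' hi'' hmem
    have : i'' = i := by
      rcases lt_trichotomy i'' i with h | h | h
      · exfalso
        have : ∑ i' ∈ Finset.range (i''+1), (P i').card ≤ ∑ i' ∈ Finset.range i, (P i').card :=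
          Finset.sum_le_sum_of_subset (Finset.range_subset_range.2 (by omega))
        omega
      · exact h
      · exfalso
        have : ∑ i' ∈ Finset.range (i+1), (P i').card ≤ ∑ i' ∈ Finset.range i'', (P i').card :=
          Finset.sum_le_sum_of_subset (Finset.range_subset_range.2 (by omega))
        omega
    rwa [this] at hmem

end Slice

section Main
variable {r : ℕ} {lam mu : List ℕ} {d : Equiv.Perm (Fin r)}

def dcoset' (r : ℕ) (lam mu : List ℕ) (d : Equiv.Perm (Fin r)) : Set (Equiv.Perm (Fin r)) :=
  {w | ∃ u ∈ young r lam, ∃ v ∈ young r mu, w = u * d * v}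

lemma d_mono (hd : ∀ w ∈ dcoset' r lam mu d, len d ≤ len w) :
    ∀ a b : Fin r, SameBlock mu a b → a < b → d a < d b := by
  apply mono_of_adj
  intro k k' hkk hsb
  rcases lt_trichotomy (d k) (d k') with h | h | h
  · exact h
  · exact absurd (d.injective h) (by rw [Fin.ext_iff]; omega)
  · exfalso
    have hs : Equiv.swap k k' ∈ young r mu := swap_mem_young hkk hsb
    have hw : d * Equiv.swap k k' ∈ dcoset' r lam mu d :=
      ⟨1, one_mem _, Equiv.swap k k', hs, by group⟩
    have := hd _ hw
    have := len_mul_swap hkk h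
    omega

lemma dinv_mono (hd : ∀ w ∈ dcoset' r lam mu d, len d ≤ len w) :
    ∀ a b : Fin r, SameBlock lam a b → a < b → d⁻¹ a < d⁻¹ b := by
  apply mono_of_adj
  intro k k' hkk hsb
  rcases lt_trichotomy (d⁻¹ k) (d⁻¹ k') with h | h | h
  · exact h
  · exact absurd (d⁻¹.injective h) (by rw [Fin.ext_iff]; omega)
  · exfalso
    have hs : Equiv.swap k k' ∈ young r lam := swap_mem_young hkk hsb
    have hw : Equiv.swap k k' * d ∈ dcoset' r lam mu d :=
      ⟨Equiv.swap k k', hs, 1, one_mem _, by group⟩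
    have h1 := hd _ hw
    have h2 : len (Equiv.swap k k' * d) = len (d⁻¹ * Equiv.swap k k') := by
      rw [← len_inv (d⁻¹ * Equiv.swap k k')]
      rw [mul_inv_rev, inv_inv, Equiv.swap_inv]
    have h3 := len_mul_swap (w := d⁻¹) hkk h
    rw [len_inv] at h3
    omega

end Main

-- CHUNK4
section Lists

lemma map_range_sum (f : ℕ → ℕ) (n : ℕ) :
    (((List.range n).map f)).sum = ∑ i ∈ Finset.range n, f i := by
  induction n with
  | zero => simp
  | succ m ih =>
    rw [List.range_succ, List.map_append, List.sum_append, Finset.sum_range_succ, ih]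
    simp

lemma flat_take (c : ℕ) :
    ∀ (m : ℕ) (g : ℕ → List ℕ), (∀ j, (g j).length = c) → ∀ j i, j < m → i ≤ c →
    ((((List.range m).flatMap g)).take (j*c+i)).sum
      = (∑ j' ∈ Finset.range j, (g j').sum) + ((g j).take i).sum := by
  intro m
  induction m with
  | zero => omega
  | succ m ih =>
    intro g hg j i hj hi
    have hdecomp : (List.range (m+1)).flatMap g
        = g 0 ++ (List.range m).flatMap (fun t => g (t+1)) := by
      rw [List.range_succ_eq_map, List.flatMap_cons, List.flatMap_map]
    rcases Nat.eq_zero_or_pos j with rfl | hjpos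
    · rw [hdecomp, List.take_append, List.sum_append]
      have h0 : i - (g 0).length = 0 := by rw [hg 0]; omega
      simp [h0]
    · obtain ⟨j', rfl⟩ : ∃ j', j = j' + 1 := ⟨j - 1, by omega⟩
      have hn : (j'+1)*c + i = (g 0).length + (j'*c + i) := by rw [hg 0]; ring
      rw [hdecomp, List.take_append, List.sum_append, hn]
      rw [List.take_of_length_le (by omega), Nat.add_sub_cancel_left]
      rw [ih (fun t => g (t+1)) (fun t => hg (t+1)) j' i (by omega) hi]
      rw [Finset.sum_range_succ']
      ring

end Lists

section Main2
variable {r : ℕ} {lam mu : List ℕ} {d : Equiv.Perm (Fin r)}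

lemma colSum_eq (hlam : lam.sum = r) (j : ℕ) :
    ∑ i ∈ Finset.range lam.length, aEntry r lam mu d i j = (blockF r mu j).card := by
  have himg : (blockF r mu j).image d
      = (Finset.range lam.length).biUnion
        (fun i => blockF r lam i ∩ (blockF r mu j).image d) := by
    ext z
    simp only [Finset.mem_biUnion, Finset.mem_inter, Finset.mem_range]
    constructor
    · intro hz
      obtain ⟨i, hi, hzi⟩ := exists_blockF hlam z
      exact ⟨i, hi, hzi, hz⟩
    · rintro ⟨i, _, _, hz⟩
      exact hz
  have hcard : ((blockF r mu j).image d).card = (blockF r mu j).card :=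
    Finset.card_image_of_injective _ d.injective
  rw [← hcard, himg, Finset.card_biUnion]
  · rfl
  · intro i1 _ i2 _ h12
    rw [Function.onFun, Finset.disjoint_left]
    intro z hz1 hz2
    rw [Finset.mem_inter] at hz1 hz2
    exact blockF_disjoint h12 hz1.1 hz2.1

lemma rowSum_eq (hmu : mu.sum = r) (i : ℕ) :
    ∑ j ∈ Finset.range mu.length, aEntry r lam mu d i j = (blockF r lam i).card := by
  have himg : blockF r lam i
      = (Finset.range mu.length).biUnion
        (fun j => blockF r lam i ∩ (blockF r mu j).image d) := by
    ext z
    simp only [Finset.mem_biUnion, Finset.mem_inter, Finset.mem_range]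
    constructor
    · intro hz
      obtain ⟨j, hj, hzj⟩ := exists_blockF hmu (d⁻¹ z)
      refine ⟨j, hj, hz, Finset.mem_image.2 ⟨d⁻¹ z, hzj, by simp⟩⟩
    · rintro ⟨j, _, hz, _⟩
      exact hz
  conv_rhs => rw [himg]
  rw [Finset.card_biUnion]
  · rfl
  · intro j1 _ j2 _ h12
    rw [Function.onFun, Finset.disjoint_left]
    intro z hz1 hz2
    rw [Finset.mem_inter, Finset.mem_image] at hz1 hz2
    obtain ⟨w1, hw1, rfl⟩ := hz1.2
    obtain ⟨w2, hw2, he⟩ := hz2.2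
    have : w2 = w1 := d.injective he
    subst this
    exact blockF_disjoint h12 hw1 hw2

lemma telescope (l : List ℕ) (hl : l.sum = r) (j : ℕ) :
    ∑ j' ∈ Finset.range j, (blockF r l j').card = (l.take j).sum := by
  induction j with
  | zero => simp
  | succ m ih =>
    rw [Finset.sum_range_succ, ih, card_blockF hl m]
    have := take_sum_mono l (show m ≤ m+1 by omega)
    omega

lemma muPlus_take (hlam : lam.sum = r) (hmu : mu.sum = r) {j i : ℕ}
    (hj : j < mu.length) (hi : i ≤ lam.length) :
    ((muPlus r lam mu d).take (j * lam.length + i)).sum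
      = (mu.take j).sum + ∑ i' ∈ Finset.range i, aEntry r lam mu d i' j := by
  rw [muPlus, flat_take lam.length mu.length _ (fun j => by simp) j i hj hi]
  congr 1
  · rw [← telescope mu hmu j]
    apply Finset.sum_congr rfl
    intro j' _
    rw [map_range_sum, colSum_eq hlam]
  · rw [← List.map_take, List.take_range, Nat.min_eq_left hi, map_range_sum]

lemma lamMinus_take (hlam : lam.sum = r) (hmu : mu.sum = r) {i j : ℕ}
    (hi : i < lam.length) (hj : j ≤ mu.length) :
    ((lamMinus r lam mu d).take (i * mu.length + j)).sum
      = (lam.take i).sum + ∑ j' ∈ Finset.range j, aEntry r lam mu d i j' := by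
  rw [lamMinus, flat_take mu.length lam.length _ (fun i => by simp) i j hi hj]
  congr 1
  · rw [← telescope lam hlam i]
    apply Finset.sum_congr rfl
    intro i' _
    rw [map_range_sum, rowSum_eq hmu]
  · rw [← List.map_take, List.take_range, Nat.min_eq_left hj, map_range_sum]

lemma muPlus_length : (muPlus r lam mu d).length = mu.length * lam.length := by
  rw [muPlus, List.length_flatMap, map_range_sum]
  simp [Function.comp, Finset.sum_const, Nat.mul_comm]

lemma lamMinus_length : (lamMinus r lam mu d).length = lam.length * mu.length := by
  rw [lamMinus, List.length_flatMap, map_range_sum]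
  simp [Function.comp, Finset.sum_const, Nat.mul_comm]

lemma muPlus_sum (hlam : lam.sum = r) (hmu : mu.sum = r) :
    (muPlus r lam mu d).sum = r := by
  rcases Nat.eq_zero_or_pos mu.length with h0 | hpos
  · have : mu = [] := List.length_eq_zero_iff.1 h0
    subst this
    simp at hmu
    simp [muPlus, ← hmu]
  · have h1 : (muPlus r lam mu d).take ((mu.length - 1) * lam.length + lam.length)
        = muPlus r lam mu d := by
      apply List.take_of_length_le
      rw [muPlus_length]
      have : (mu.length - 1) * lam.length + lam.length = mu.length * lam.length := by
        have : mu.length - 1 + 1 = mu.length := by omega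
        calc (mu.length - 1) * lam.length + lam.length
            = (mu.length - 1 + 1) * lam.length := by ring
          _ = mu.length * lam.length := by rw [this]
      omega
    have h2 := muPlus_take (d := d) hlam hmu (j := mu.length - 1) (i := lam.length)
      (by omega) (le_refl _)
    rw [h1] at h2
    rw [h2, colSum_eq hlam, card_blockF hmu]
    have h3 : mu.take (mu.length - 1 + 1) = mu := List.take_of_length_le (by omega)
    rw [h3]
    have h4 : (mu.take (mu.length - 1)).sum ≤ mu.sum := by
      conv_rhs => rw [← List.take_append_drop (mu.length - 1) mu]
      rw [List.sum_append]
      omega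
    omega

lemma lamMinus_sum (hlam : lam.sum = r) (hmu : mu.sum = r) :
    (lamMinus r lam mu d).sum = r := by
  rcases Nat.eq_zero_or_pos lam.length with h0 | hpos
  · have : lam = [] := List.length_eq_zero_iff.1 h0
    subst this
    simp at hlam
    simp [lamMinus, ← hlam]
  · have h1 : (lamMinus r lam mu d).take ((lam.length - 1) * mu.length + mu.length)
        = lamMinus r lam mu d := by
      apply List.take_of_length_le
      rw [lamMinus_length]
      have h5 : lam.length - 1 + 1 = lam.length := by omega
      have : (lam.length - 1) * mu.length + mu.length = lam.length * mu.length := by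
        calc (lam.length - 1) * mu.length + mu.length
            = (lam.length - 1 + 1) * mu.length := by ring
          _ = lam.length * mu.length := by rw [h5]
      omega
    have h2 := lamMinus_take (d := d) hlam hmu (i := lam.length - 1) (j := mu.length)
      (by omega) (le_refl _)
    rw [h1] at h2
    rw [h2, rowSum_eq hmu, card_blockF hlam]
    have h3 : lam.take (lam.length - 1 + 1) = lam := List.take_of_length_le (by omega)
    rw [h3]
    have h4 : (lam.take (lam.length - 1)).sum ≤ lam.sum := by
      conv_rhs => rw [← List.take_append_drop (lam.length - 1) lam]
      rw [List.sum_append]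
      omega
    omega

end Main2

-- CHUNK5
section Main3
variable {r : ℕ} {lam mu : List ℕ} {d : Equiv.Perm (Fin r)}

lemma mem_blockF_muPlus (hlam : lam.sum = r) (hmu : mu.sum = r) {j i : ℕ}
    (hj : j < mu.length) (hi : i < lam.length) {x : Fin r} :
    x ∈ blockF r (muPlus r lam mu d) (j * lam.length + i) ↔
      (mu.take j).sum + (∑ i' ∈ Finset.range i, aEntry r lam mu d i' j) ≤ (x:ℕ) ∧
      (x:ℕ) < (mu.take j).sum + (∑ i' ∈ Finset.range (i+1), aEntry r lam mu d i' j) := by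
  rw [mem_blockF, muPlus_take hlam hmu hj (le_of_lt hi)]
  have he : j * lam.length + i + 1 = j * lam.length + (i+1) := by omega
  rw [he, muPlus_take hlam hmu hj (by omega)]

lemma mem_blockF_lamMinus (hlam : lam.sum = r) (hmu : mu.sum = r) {i j : ℕ}
    (hi : i < lam.length) (hj : j < mu.length) {x : Fin r} :
    x ∈ blockF r (lamMinus r lam mu d) (i * mu.length + j) ↔
      (lam.take i).sum + (∑ j' ∈ Finset.range j, aEntry r lam mu d i j') ≤ (x:ℕ) ∧
      (x:ℕ) < (lam.take i).sum + (∑ j' ∈ Finset.range (j+1), aEntry r lam mu d i j') := by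
  rw [mem_blockF, lamMinus_take hlam hmu hi (le_of_lt hj)]
  have he : i * mu.length + j + 1 = i * mu.length + (j+1) := by omega
  rw [he, lamMinus_take hlam hmu hi (by omega)]

lemma colslice (hlam : lam.sum = r) (hmu : mu.sum = r)
    (hd : ∀ w ∈ dcoset' r lam mu d, len d ≤ len w) {j i : ℕ}
    (hj : j < mu.length) (hi : i < lam.length) (x : Fin r) (hx : x ∈ blockF r mu j) :
    d x ∈ blockF r lam i ↔ x ∈ blockF r (muPlus r lam mu d) (j * lam.length + i) := by
  have hsl := slice (f := d) (I := blockF r mu j) (aLo := (mu.take j).sum)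
      (bHi := (mu.take (j+1)).sum) (fun x => mem_blockF)
      (fun x y hx hy hxy => d_mono hd x y ⟨j, hj, hx, hy⟩ hxy)
      (P := fun i' => blockF r lam i' ∩ (blockF r mu j).image d) (n := lam.length)
      (by
        intro z hz
        obtain ⟨i', hi', hzi⟩ := exists_blockF hlam z
        exact ⟨i', hi', Finset.mem_inter.2 ⟨hzi, hz⟩⟩)
      (fun i' _ z hz => (Finset.mem_inter.1 hz).2)
      (fun i1 i2 h12 x hx y hy =>
        blockF_lt h12 (Finset.mem_inter.1 hx).1 (Finset.mem_inter.1 hy).1)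
      x hx i hi
  have hPc : ∀ i' : ℕ, (blockF r lam i' ∩ (blockF r mu j).image d).card
      = aEntry r lam mu d i' j := fun _ => rfl
  simp only [hPc] at hsl
  rw [mem_blockF_muPlus hlam hmu hj hi, ← hsl, Finset.mem_inter]
  constructor
  · intro h
    exact ⟨h, Finset.mem_image_of_mem d hx⟩
  · rintro ⟨h, -⟩
    exact h

lemma rowslice (hlam : lam.sum = r) (hmu : mu.sum = r)
    (hd : ∀ w ∈ dcoset' r lam mu d, len d ≤ len w) {i j : ℕ}
    (hi : i < lam.length) (hj : j < mu.length) (x : Fin r) (hx : x ∈ blockF r lam i) :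
    d⁻¹ x ∈ blockF r mu j ↔ x ∈ blockF r (lamMinus r lam mu d) (i * mu.length + j) := by
  have himg : ∀ j' : ℕ, (blockF r lam i ∩ (blockF r mu j').image d).image (⇑(d⁻¹))
      = blockF r mu j' ∩ (blockF r lam i).image (⇑(d⁻¹)) := by
    intro j'
    ext z
    simp only [Finset.mem_image, Finset.mem_inter]
    constructor
    · rintro ⟨w, ⟨hw1, w', hw', rfl⟩, rfl⟩
      refine ⟨by simpa using hw', d w', hw1, by simp⟩
    · rintro ⟨hz1, w, hw, rfl⟩
      exact ⟨w, ⟨hw, d⁻¹ w, hz1, by simp⟩, rfl⟩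
  have hPc : ∀ j' : ℕ, (blockF r mu j' ∩ (blockF r lam i).image (⇑(d⁻¹))).card
      = aEntry r lam mu d i j' := by
    intro j'
    rw [← himg j', Finset.card_image_of_injective _ (d⁻¹ : Equiv.Perm (Fin r)).injective]
    rfl
  have hsl := slice (f := d⁻¹) (I := blockF r lam i) (aLo := (lam.take i).sum)
      (bHi := (lam.take (i+1)).sum) (fun x => mem_blockF)
      (fun x y hx hy hxy => dinv_mono hd x y ⟨i, hi, hx, hy⟩ hxy)
      (P := fun j' => blockF r mu j' ∩ (blockF r lam i).image (⇑(d⁻¹))) (n := mu.length)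
      (by
        intro z hz
        obtain ⟨j', hj', hzj⟩ := exists_blockF hmu z
        exact ⟨j', hj', Finset.mem_inter.2 ⟨hzj, hz⟩⟩)
      (fun j' _ z hz => (Finset.mem_inter.1 hz).2)
      (fun j1 j2 h12 x hx y hy =>
        blockF_lt h12 (Finset.mem_inter.1 hx).1 (Finset.mem_inter.1 hy).1)
      x hx j hj
  simp only [hPc] at hsl
  rw [mem_blockF_lamMinus hlam hmu hi hj, ← hsl, Finset.mem_inter]
  constructor
  · intro h
    exact ⟨h, Finset.mem_image_of_mem (⇑(d⁻¹)) hx⟩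
  · rintro ⟨h, -⟩
    exact h

lemma Dsub (hlam : lam.sum = r) (hmu : mu.sum = r) {j i : ℕ}
    (hj : j < mu.length) (hi : i < lam.length) :
    blockF r (muPlus r lam mu d) (j * lam.length + i) ⊆ blockF r mu j := by
  intro x hx
  rw [mem_blockF_muPlus hlam hmu hj hi] at hx
  rw [mem_blockF]
  have h1 : (∑ i' ∈ Finset.range (i+1), aEntry r lam mu d i' j)
      ≤ ∑ i' ∈ Finset.range lam.length, aEntry r lam mu d i' j :=
    Finset.sum_le_sum_of_subset (Finset.range_subset_range.2 (by omega))
  have h2 := colSum_eq (mu := mu) (d := d) hlam j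
  have h3 := card_blockF hmu j
  have h4 := take_sum_mono mu (show j ≤ j + 1 by omega)
  omega

lemma Esub (hlam : lam.sum = r) (hmu : mu.sum = r) {i j : ℕ}
    (hi : i < lam.length) (hj : j < mu.length) :
    blockF r (lamMinus r lam mu d) (i * mu.length + j) ⊆ blockF r lam i := by
  intro x hx
  rw [mem_blockF_lamMinus hlam hmu hi hj] at hx
  rw [mem_blockF]
  have h1 : (∑ j' ∈ Finset.range (j+1), aEntry r lam mu d i j')
      ≤ ∑ j' ∈ Finset.range mu.length, aEntry r lam mu d i j' :=
    Finset.sum_le_sum_of_subset (Finset.range_subset_range.2 (by omega))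
  have h2 := rowSum_eq (lam := lam) (d := d) hmu i
  have h3 := card_blockF hlam i
  have h4 := take_sum_mono lam (show i ≤ i + 1 by omega)
  omega

lemma dD_eq_E (hlam : lam.sum = r) (hmu : mu.sum = r)
    (hd : ∀ w ∈ dcoset' r lam mu d, len d ≤ len w) {i j : ℕ}
    (hi : i < lam.length) (hj : j < mu.length) {x : Fin r} :
    x ∈ blockF r (lamMinus r lam mu d) (i * mu.length + j) ↔
      d⁻¹ x ∈ blockF r (muPlus r lam mu d) (j * lam.length + i) := by
  constructor
  · intro hx
    have hxB : x ∈ blockF r lam i := Esub hlam hmu hi hj hx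
    have hxC : d⁻¹ x ∈ blockF r mu j := (rowslice hlam hmu hd hi hj x hxB).2 hx
    refine (colslice hlam hmu hd hj hi _ hxC).1 (by simpa using hxB)
  · intro hx
    have hxC : d⁻¹ x ∈ blockF r mu j := Dsub hlam hmu hj hi hx
    have hxB : x ∈ blockF r lam i := by
      have := (colslice hlam hmu hd hj hi _ hxC).2 hx
      simpa using this
    exact (rowslice hlam hmu hd hi hj x hxB).1 hxC

lemma mem_young_muPlus (hlam : lam.sum = r) (hmu : mu.sum = r)
    {v : Equiv.Perm (Fin r)} :
    v ∈ young r (muPlus r lam mu d) ↔ ∀ j < mu.length, ∀ i < lam.length,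
      ∀ x ∈ blockF r (muPlus r lam mu d) (j * lam.length + i),
        v x ∈ blockF r (muPlus r lam mu d) (j * lam.length + i) := by
  rw [mem_young_iff]
  constructor
  · intro h j hj i hi
    apply h
    rw [muPlus_length]
    calc j * lam.length + i < j * lam.length + lam.length := by omega
      _ = (j+1) * lam.length := by ring
      _ ≤ mu.length * lam.length := Nat.mul_le_mul_right _ (by omega)
  · intro h m hm
    rw [muPlus_length] at hm
    have hpos : 0 < lam.length := by
      rcases Nat.eq_zero_or_pos lam.length with h0 | h0
      · rw [h0] at hm
        omega
      · exact h0
    have hdm : m = (m / lam.length) * lam.length + m % lam.length := by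
      rw [Nat.div_add_mod']
    have hm' : m < lam.length * mu.length := by rw [Nat.mul_comm]; exact hm
    have hj : m / lam.length < mu.length := Nat.div_lt_of_lt_mul hm'
    have hi : m % lam.length < lam.length := Nat.mod_lt _ hpos
    rw [hdm]
    exact h _ hj _ hi

lemma mem_young_lamMinus (hlam : lam.sum = r) (hmu : mu.sum = r)
    {v : Equiv.Perm (Fin r)} :
    v ∈ young r (lamMinus r lam mu d) ↔ ∀ i < lam.length, ∀ j < mu.length,
      ∀ x ∈ blockF r (lamMinus r lam mu d) (i * mu.length + j),
        v x ∈ blockF r (lamMinus r lam mu d) (i * mu.length + j) := by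
  rw [mem_young_iff]
  constructor
  · intro h i hi j hj
    apply h
    rw [lamMinus_length]
    calc i * mu.length + j < i * mu.length + mu.length := by omega
      _ = (i+1) * mu.length := by ring
      _ ≤ lam.length * mu.length := Nat.mul_le_mul_right _ (by omega)
  · intro h m hm
    rw [lamMinus_length] at hm
    have hpos : 0 < mu.length := by
      rcases Nat.eq_zero_or_pos mu.length with h0 | h0
      · rw [h0] at hm
        omega
      · exact h0
    have hdm : m = (m / mu.length) * mu.length + m % mu.length := by
      rw [Nat.div_add_mod']
    have hm' : m < mu.length * lam.length := by rw [Nat.mul_comm]; exact hm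
    have hj : m / mu.length < lam.length := Nat.div_lt_of_lt_mul hm'
    have hi : m % mu.length < mu.length := Nat.mod_lt _ hpos
    rw [hdm]
    exact h _ hj _ hi

lemma muPlus_le_mu (hlam : lam.sum = r) (hmu : mu.sum = r)
    (hd : ∀ w ∈ dcoset' r lam mu d, len d ≤ len w) :
    young r (muPlus r lam mu d) ≤ young r mu := by
  intro v hv
  rw [mem_young_iff]
  intro j hj x hx
  obtain ⟨i, hi, hdx⟩ := exists_blockF hlam (d x)
  have hxD : x ∈ blockF r (muPlus r lam mu d) (j * lam.length + i) :=
    (colslice hlam hmu hd hj hi x hx).1 hdx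
  have := (mem_young_muPlus hlam hmu).1 hv j hj i hi x hxD
  exact Dsub hlam hmu hj hi this

lemma lamMinus_le_lam (hlam : lam.sum = r) (hmu : mu.sum = r)
    (hd : ∀ w ∈ dcoset' r lam mu d, len d ≤ len w) :
    young r (lamMinus r lam mu d) ≤ young r lam := by
  intro v hv
  rw [mem_young_iff]
  intro i hi x hx
  obtain ⟨j, hj, hdx⟩ := exists_blockF hmu (d⁻¹ x)
  have hxE : x ∈ blockF r (lamMinus r lam mu d) (i * mu.length + j) :=
    (rowslice hlam hmu hd hi hj x hx).1 hdx
  have := (mem_young_lamMinus hlam hmu).1 hv i hi j hj x hxE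
  exact Esub hlam hmu hi hj this

lemma conj_iff (hlam : lam.sum = r) (hmu : mu.sum = r)
    (hd : ∀ w ∈ dcoset' r lam mu d, len d ≤ len w) {v : Equiv.Perm (Fin r)} :
    v ∈ young r (muPlus r lam mu d) ↔ d * v * d⁻¹ ∈ young r (lamMinus r lam mu d) := by
  rw [mem_young_muPlus hlam hmu, mem_young_lamMinus hlam hmu]
  constructor
  · intro h i hi j hj x hx
    rw [dD_eq_E hlam hmu hd hi hj] at hx ⊢
    have := h j hj i hi _ hx
    simpa using this
  · intro h j hj i hi x hx
    have hx' : d x ∈ blockF r (lamMinus r lam mu d) (i * mu.length + j) := by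
      rw [dD_eq_E hlam hmu hd hi hj]
      simpa using hx
    have := h i hi j hj _ hx'
    rw [dD_eq_E hlam hmu hd hi hj] at this
    simpa using this

lemma inter_eq (hlam : lam.sum = r) (hmu : mu.sum = r)
    (hd : ∀ w ∈ dcoset' r lam mu d, len d ≤ len w) {w v : Equiv.Perm (Fin r)}
    (hw : w ∈ young r lam) (hv : v ∈ young r mu) (hwv : w = d * v * d⁻¹) :
    w ∈ young r (lamMinus r lam mu d) := by
  rw [mem_young_lamMinus hlam hmu]
  intro i hi j hj x hx
  have hxB : x ∈ blockF r lam i := Esub hlam hmu hi hj hx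
  have hxC : d⁻¹ x ∈ blockF r mu j := (rowslice hlam hmu hd hi hj x hxB).2 hx
  have hwxB : w x ∈ blockF r lam i := mem_young_iff.1 hw i hi x hxB
  have hvd : d⁻¹ (w x) ∈ blockF r mu j := by
    rw [hwv]
    simp only [Equiv.Perm.mul_apply, Equiv.Perm.coe_inv, Equiv.symm_apply_apply]
    exact mem_young_iff.1 hv j hj _ hxC
  exact (rowslice hlam hmu hd hi hj (w x) hwxB).1 hvd

end Main3

-- CHUNK6
section Main4
variable {r : ℕ} {lam mu : List ℕ} {d : Equiv.Perm (Fin r)}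

lemma muPlus_idx_lt {j i : ℕ} (hj : j < mu.length) (hi : i < lam.length) :
    j * lam.length + i < (muPlus r lam mu d).length := by
  rw [muPlus_length]
  calc j * lam.length + i < j * lam.length + lam.length := by omega
    _ = (j+1) * lam.length := by ring
    _ ≤ mu.length * lam.length := Nat.mul_le_mul_right _ (by omega)

lemma lamMinus_idx_lt {i j : ℕ} (hi : i < lam.length) (hj : j < mu.length) :
    i * mu.length + j < (lamMinus r lam mu d).length := by
  rw [lamMinus_length]
  calc i * mu.length + j < i * mu.length + mu.length := by omega
    _ = (i+1) * mu.length := by ring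
    _ ≤ lam.length * mu.length := Nat.mul_le_mul_right _ (by omega)

lemma min_mono_right {l : List ℕ} {y : Equiv.Perm (Fin r)}
    (hmin : ∀ z ∈ young r l, len y ≤ len (z * y)) :
    ∀ a b : Fin r, SameBlock l a b → a < b → y⁻¹ a < y⁻¹ b := by
  apply mono_of_adj
  intro k k' hkk hsb
  rcases lt_trichotomy (y⁻¹ k) (y⁻¹ k') with h | h | h
  · exact h
  · exact absurd (y⁻¹.injective h) (by rw [Fin.ext_iff]; omega)
  · exfalso
    have hs : Equiv.swap k k' ∈ young r l := swap_mem_young hkk hsb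
    have h1 := hmin _ hs
    have h2 : len (Equiv.swap k k' * y) = len (y⁻¹ * Equiv.swap k k') := by
      rw [← len_inv (y⁻¹ * Equiv.swap k k'), mul_inv_rev, inv_inv, Equiv.swap_inv]
    have h3 := len_mul_swap (w := y⁻¹) hkk h
    rw [len_inv] at h3
    omega

lemma min_mono_left {l : List ℕ} {x : Equiv.Perm (Fin r)}
    (hmin : ∀ z ∈ young r l, len x ≤ len (x * z)) :
    ∀ a b : Fin r, SameBlock l a b → a < b → x a < x b := by
  apply mono_of_adj
  intro k k' hkk hsb
  rcases lt_trichotomy (x k) (x k') with h | h | h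
  · exact h
  · exact absurd (x.injective h) (by rw [Fin.ext_iff]; omega)
  · exfalso
    have hs : Equiv.swap k k' ∈ young r l := swap_mem_young hkk hsb
    have h1 := hmin _ hs
    have h3 := len_mul_swap (w := x) hkk h
    omega

lemma len_add_left {l : List ℕ} (hsum : l.sum = r) {h y : Equiv.Perm (Fin r)}
    (hh : h ∈ young r l)
    (hy : ∀ a b : Fin r, SameBlock l a b → a < b → y⁻¹ a < y⁻¹ b) :
    len (h * y) = len h + len y := by
  apply len_mul
  intro i j hij hji
  by_cases hsb : SameBlock l (y j) (y i)
  · exfalso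
    have := hy (y j) (y i) hsb hji
    simp only [Equiv.Perm.coe_inv, Equiv.symm_apply_apply] at this
    exact absurd hij (not_lt.2 this.le)
  · exact young_lt hsum hh hji hsb

lemma len_add_right {l : List ℕ} (hsum : l.sum = r) {x h : Equiv.Perm (Fin r)}
    (hh : h ∈ young r l)
    (hx : ∀ a b : Fin r, SameBlock l a b → a < b → x a < x b) :
    len (x * h) = len x + len h := by
  apply len_mul
  intro i j hij hji
  have hsbij : SameBlock l i j := by
    by_contra hns
    exact absurd (young_lt hsum hh hij hns) (not_lt.2 hji.le)
  obtain ⟨m, hm, him, hjm⟩ := hsbij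
  exact hx (h j) (h i) ⟨m, hm, mem_young_iff.1 hh m hm j hjm, mem_young_iff.1 hh m hm i him⟩ hji

lemma lenA1 (hlam : lam.sum = r)
    (hd : ∀ w ∈ dcoset' r lam mu d, len d ≤ len w) {x : Equiv.Perm (Fin r)}
    (hx : x ∈ young r lam) : len (x * d) = len x + len d := by
  apply len_mul
  intro i j hij hji
  by_cases hsb : SameBlock lam (d j) (d i)
  · exfalso
    have := dinv_mono hd (d j) (d i) hsb hji
    simp only [Equiv.Perm.coe_inv, Equiv.symm_apply_apply] at this
    exact absurd hij (not_lt.2 this.le)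
  · exact young_lt hlam hx hji hsb

lemma lenA2 (hmu : mu.sum = r)
    (hd : ∀ w ∈ dcoset' r lam mu d, len d ≤ len w) {y : Equiv.Perm (Fin r)}
    (hy : y ∈ young r mu) : len (d * y) = len d + len y := by
  apply len_mul
  intro i j hij hji
  have hsbij : SameBlock mu i j := by
    by_contra hns
    exact absurd (young_lt hmu hy hij hns) (not_lt.2 hji.le)
  obtain ⟨m, hm, him, hjm⟩ := hsbij
  exact d_mono hd (y j) (y i)
    ⟨m, hm, mem_young_iff.1 hy m hm j hjm, mem_young_iff.1 hy m hm i him⟩ hji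

lemma lenA3 (hlam : lam.sum = r) (hmu : mu.sum = r)
    (hd : ∀ w ∈ dcoset' r lam mu d, len d ≤ len w) {x y : Equiv.Perm (Fin r)}
    (hx : x ∈ young r lam) (hy : y ∈ young r mu)
    (hymono : ∀ a b : Fin r, SameBlock (muPlus r lam mu d) a b → a < b → y⁻¹ a < y⁻¹ b) :
    len (x * d * y) = len x + len d + len y := by
  have key : len ((x * d) * y) = len (x * d) + len y := by
    apply len_mul
    intro i j hij hji
    set a := y j with ha
    set b := y i with hb
    have hab : a < b := hji
    have hsbij : SameBlock mu i j := by
      by_contra hns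
      exact absurd (young_lt hmu hy hij hns) (not_lt.2 hji.le)
    obtain ⟨j0, hj0, hij0, hjj0⟩ := hsbij
    have haC : a ∈ blockF r mu j0 := mem_young_iff.1 hy j0 hj0 j hjj0
    have hbC : b ∈ blockF r mu j0 := mem_young_iff.1 hy j0 hj0 i hij0
    obtain ⟨i1, hi1, hda⟩ := exists_blockF hlam (d a)
    obtain ⟨i2, hi2, hdb⟩ := exists_blockF hlam (d b)
    have haD : a ∈ blockF r (muPlus r lam mu d) (j0 * lam.length + i1) :=
      (colslice hlam hmu hd hj0 hi1 a haC).1 hda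
    have hbD : b ∈ blockF r (muPlus r lam mu d) (j0 * lam.length + i2) :=
      (colslice hlam hmu hd hj0 hi2 b hbC).1 hdb
    have h12 : i1 < i2 := by
      rcases lt_trichotomy i1 i2 with h | h | h
      · exact h
      · exfalso
        subst h
        have hsb : SameBlock (muPlus r lam mu d) a b :=
          ⟨j0 * lam.length + i1, muPlus_idx_lt hj0 hi1, haD, hbD⟩
        have := hymono a b hsb hab
        rw [ha, hb] at this
        simp only [Equiv.Perm.coe_inv, Equiv.symm_apply_apply] at this
        exact absurd hij (not_lt.2 this.le)
      · exfalso
        have : b < a := blockF_lt (by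
          have := Nat.add_lt_add_left h (j0 * lam.length)
          omega) hbD haD
        exact absurd hab (not_lt.2 this.le)
    have hxa : x (d a) ∈ blockF r lam i1 := mem_young_iff.1 hx i1 hi1 _ hda
    have hxb : x (d b) ∈ blockF r lam i2 := mem_young_iff.1 hx i2 hi2 _ hdb
    have := blockF_lt h12 hxa hxb
    simpa [ha, hb] using this
  rw [key, lenA1 hlam hd hx]

lemma lenA4 (hlam : lam.sum = r) (hmu : mu.sum = r)
    (hd : ∀ w ∈ dcoset' r lam mu d, len d ≤ len w) {x y : Equiv.Perm (Fin r)}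
    (hx : x ∈ young r lam) (hy : y ∈ young r mu)
    (hxmono : ∀ a b : Fin r, SameBlock (lamMinus r lam mu d) a b → a < b → x a < x b) :
    len (x * d * y) = len x + len d + len y := by
  have key : len (x * (d * y)) = len x + len (d * y) := by
    apply len_mul
    intro i j hij hji
    set a := (d * y) j with ha
    set b := (d * y) i with hb
    have hab : a < b := hji
    by_cases hsbL : SameBlock lam a b
    · obtain ⟨i0, hi0, haB, hbB⟩ := hsbL
      obtain ⟨j1, hj1, hda⟩ := exists_blockF hmu (d⁻¹ a)
      obtain ⟨j2, hj2, hdb⟩ := exists_blockF hmu (d⁻¹ b)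
      have haE : a ∈ blockF r (lamMinus r lam mu d) (i0 * mu.length + j1) :=
        (rowslice hlam hmu hd hi0 hj1 a haB).1 hda
      have hbE : b ∈ blockF r (lamMinus r lam mu d) (i0 * mu.length + j2) :=
        (rowslice hlam hmu hd hi0 hj2 b hbB).1 hdb
      rcases lt_trichotomy j1 j2 with h | h | h
      · exfalso
        have hyinv : y⁻¹ ∈ young r mu := inv_mem hy
        have h1 : y⁻¹ (d⁻¹ a) ∈ blockF r mu j1 := mem_young_iff.1 hyinv j1 hj1 _ hda
        have h2 : y⁻¹ (d⁻¹ b) ∈ blockF r mu j2 := mem_young_iff.1 hyinv j2 hj2 _ hdb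
        have h3 : y⁻¹ (d⁻¹ a) < y⁻¹ (d⁻¹ b) := blockF_lt h h1 h2
        have e1 : y⁻¹ (d⁻¹ a) = j := by
          rw [ha]
          simp [Equiv.Perm.mul_apply]
        have e2 : y⁻¹ (d⁻¹ b) = i := by
          rw [hb]
          simp [Equiv.Perm.mul_apply]
        rw [e1, e2] at h3
        exact absurd hij (not_lt.2 h3.le)
      · subst h
        exact hxmono a b ⟨i0 * mu.length + j1, lamMinus_idx_lt hi0 hj1, haE, hbE⟩ hab
      · exfalso
        have : b < a := blockF_lt (by
          have := Nat.add_lt_add_left h (i0 * mu.length)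
          omega) hbE haE
        exact absurd hab (not_lt.2 this.le)
    · exact young_lt hlam hx hab hsbL
  rw [mul_assoc, key, lenA2 hmu hd hy]
  omega

end Main4

-- CHUNK7
section Main5
variable {r : ℕ} {lam mu : List ℕ} {d : Equiv.Perm (Fin r)}

lemma exists_fact_mu (hlam : lam.sum = r) (hmu : mu.sum = r)
    (hd : ∀ w ∈ dcoset' r lam mu d, len d ≤ len w) {w : Equiv.Perm (Fin r)}
    (hw : w ∈ dcoset' r lam mu d) :
    ∃ x y : Equiv.Perm (Fin r), x ∈ young r lam ∧ y ∈ young r mu ∧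
      (∀ z ∈ young r (muPlus r lam mu d), len y ≤ len (z * y)) ∧ w = x * d * y := by
  classical
  obtain ⟨u, hu, v0, hv0, rfl⟩ := hw
  set T : Finset (Equiv.Perm (Fin r)) :=
    Finset.univ.filter (fun y => ∃ h ∈ young r (muPlus r lam mu d), y = h * v0) with hT
  have hne : T.Nonempty := ⟨v0, by rw [hT, Finset.mem_filter]; exact ⟨Finset.mem_univ _, 1, one_mem _, by group⟩⟩
  obtain ⟨y, hyT, hymin⟩ := T.exists_min_image len hne
  rw [hT, Finset.mem_filter] at hyT
  obtain ⟨-, h0, hh0, rfl⟩ := hyT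
  have hminy : ∀ z ∈ young r (muPlus r lam mu d), len (h0 * v0) ≤ len (z * (h0 * v0)) := by
    intro z hz
    apply hymin
    rw [hT, Finset.mem_filter]
    exact ⟨Finset.mem_univ _, z * h0, mul_mem hz hh0, by group⟩
  refine ⟨u * (d * h0⁻¹ * d⁻¹), h0 * v0, ?_, ?_, hminy, by group⟩
  · apply mul_mem hu
    have : d * h0⁻¹ * d⁻¹ ∈ young r (lamMinus r lam mu d) :=
      (conj_iff hlam hmu hd).1 (inv_mem hh0)
    exact lamMinus_le_lam hlam hmu hd this
  · exact mul_mem (muPlus_le_mu hlam hmu hd hh0) hv0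

lemma exists_fact_lam (hlam : lam.sum = r) (hmu : mu.sum = r)
    (hd : ∀ w ∈ dcoset' r lam mu d, len d ≤ len w) {w : Equiv.Perm (Fin r)}
    (hw : w ∈ dcoset' r lam mu d) :
    ∃ x y : Equiv.Perm (Fin r), x ∈ young r lam ∧ y ∈ young r mu ∧
      (∀ z ∈ young r (lamMinus r lam mu d), len x ≤ len (x * z)) ∧ w = x * d * y := by
  classical
  obtain ⟨u, hu, v0, hv0, rfl⟩ := hw
  set T : Finset (Equiv.Perm (Fin r)) :=
    Finset.univ.filter (fun x => ∃ h ∈ young r (lamMinus r lam mu d), x = u * h) with hT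
  have hne : T.Nonempty := ⟨u, by rw [hT, Finset.mem_filter]; exact ⟨Finset.mem_univ _, 1, one_mem _, by group⟩⟩
  obtain ⟨x, hxT, hxmin⟩ := T.exists_min_image len hne
  rw [hT, Finset.mem_filter] at hxT
  obtain ⟨-, h0, hh0, rfl⟩ := hxT
  have hminx : ∀ z ∈ young r (lamMinus r lam mu d), len (u * h0) ≤ len ((u * h0) * z) := by
    intro z hz
    apply hxmin
    rw [hT, Finset.mem_filter]
    exact ⟨Finset.mem_univ _, h0 * z, mul_mem hh0 hz, by group⟩
  refine ⟨u * h0, (d⁻¹ * h0⁻¹ * d) * v0, ?_, ?_, hminx, by group⟩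
  · exact mul_mem hu (lamMinus_le_lam hlam hmu hd hh0)
  · apply mul_mem _ hv0
    apply muPlus_le_mu hlam hmu hd
    apply (conj_iff hlam hmu hd).2
    have he : d * (d⁻¹ * h0⁻¹ * d) * d⁻¹ = h0⁻¹ := by group
    rw [he]
    exact inv_mem hh0

end Main5

end Doso

open Doso

/-- Lemma `doso`: for `d` of minimal length in its `(S_λ, S_μ)`-double coset `C`,
(i) `(S_λ·d) ∩ (d·S_μ) = d·S_{μ⁺} = S_{λ⁻}·d`;
(ii) every `w ∈ C` factors uniquely as `w = x·d·y` with `x ∈ S_λ` and `y ∈ S_μ` minimal in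
`S_{μ⁺}·y` (resp. with `x ∈ S_λ` minimal in `x·S_{λ⁻}` and `y ∈ S_μ`), and in both
factorizations `ℓ(w) = ℓ(x) + ℓ(d) + ℓ(y)`; in particular `d` is the unique element of
`C` of minimal length. -/
theorem doso (r : ℕ) (lam mu : List ℕ) (hlam : lam.sum = r) (hmu : mu.sum = r)
    (d : Equiv.Perm (Fin r))
    (hd : ∀ w ∈ dcoset r lam mu d, len d ≤ len w) :
    (((fun u => u * d) '' (young r lam : Set (Equiv.Perm (Fin r)))) ∩
        ((fun v => d * v) '' (young r mu : Set (Equiv.Perm (Fin r)))) =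
      (fun v => d * v) '' (young r (muPlus r lam mu d) : Set (Equiv.Perm (Fin r)))) ∧
    ((fun v => d * v) '' (young r (muPlus r lam mu d) : Set (Equiv.Perm (Fin r))) =
      (fun u => u * d) '' (young r (lamMinus r lam mu d) : Set (Equiv.Perm (Fin r)))) ∧
    (∀ w ∈ dcoset r lam mu d,
      ∃! p : Equiv.Perm (Fin r) × Equiv.Perm (Fin r),
        p.1 ∈ young r lam ∧ p.2 ∈ young r mu ∧
        (∀ z ∈ young r (muPlus r lam mu d), len p.2 ≤ len (z * p.2)) ∧
        w = p.1 * d * p.2) ∧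
    (∀ w ∈ dcoset r lam mu d,
      ∃! p : Equiv.Perm (Fin r) × Equiv.Perm (Fin r),
        p.1 ∈ young r lam ∧ p.2 ∈ young r mu ∧
        (∀ z ∈ young r (lamMinus r lam mu d), len p.1 ≤ len (p.1 * z)) ∧
        w = p.1 * d * p.2) ∧
    (∀ w ∈ dcoset r lam mu d, ∀ x y : Equiv.Perm (Fin r),
      x ∈ young r lam → y ∈ young r mu →
      ((∀ z ∈ young r (muPlus r lam mu d), len y ≤ len (z * y)) ∨
        (∀ z ∈ young r (lamMinus r lam mu d), len x ≤ len (x * z))) →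
      w = x * d * y → len w = len x + len d + len y) ∧
    (∀ w ∈ dcoset r lam mu d, len w = len d → w = d) := by
  classical
  have hd' : ∀ w ∈ dcoset' r lam mu d, len d ≤ len w := hd
  have hμsum : (muPlus r lam mu d).sum = r := muPlus_sum hlam hmu
  have hlsum : (lamMinus r lam mu d).sum = r := lamMinus_sum hlam hmu
  refine ⟨?_, ?_, ?_, ?_, ?_, ?_⟩
  · -- part 1
    ext w
    simp only [Set.mem_inter_iff, Set.mem_image, SetLike.mem_coe]
    constructor
    · rintro ⟨⟨u, hu, hueq⟩, ⟨v, hv, hveq⟩⟩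
      have hudv : u = d * v * d⁻¹ := by
        have h1 : d * v = u * d := by rw [hveq, ← hueq]
        calc u = (u * d) * d⁻¹ := by group
          _ = (d * v) * d⁻¹ := by rw [h1]
          _ = d * v * d⁻¹ := by group
      have hlm : u ∈ young r (lamMinus r lam mu d) := inter_eq hlam hmu hd' hu hv hudv
      have hvμ : v ∈ young r (muPlus r lam mu d) := by
        apply (conj_iff hlam hmu hd').2
        rw [← hudv]
        exact hlm
      exact ⟨v, hvμ, hveq⟩
    · rintro ⟨v, hv, hveq⟩
      have hvmu : v ∈ young r mu := muPlus_le_mu hlam hmu hd' hv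
      have hu : d * v * d⁻¹ ∈ young r lam :=
        lamMinus_le_lam hlam hmu hd' ((conj_iff hlam hmu hd').1 hv)
      refine ⟨⟨d * v * d⁻¹, hu, ?_⟩, ⟨v, hvmu, hveq⟩⟩
      rw [← hveq]
      group
  · -- part 2
    ext w
    simp only [Set.mem_image, SetLike.mem_coe]
    constructor
    · rintro ⟨v, hv, hveq⟩
      refine ⟨d * v * d⁻¹, (conj_iff hlam hmu hd').1 hv, ?_⟩
      rw [← hveq]
      group
    · rintro ⟨u, hu, hueq⟩
      refine ⟨d⁻¹ * u * d, ?_, ?_⟩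
      · apply (conj_iff hlam hmu hd').2
        have he : d * (d⁻¹ * u * d) * d⁻¹ = u := by group
        rw [he]
        exact hu
      · rw [← hueq]
        group
  · -- part 3
    intro w hw
    obtain ⟨x, y, hx, hy, hmin, heq⟩ := exists_fact_mu hlam hmu hd' hw
    refine ⟨(x, y), ⟨hx, hy, hmin, heq⟩, ?_⟩
    rintro ⟨q1, q2⟩ ⟨hq1, hq2, hqmin, hqeq⟩
    simp only at hq1 hq2 hqmin hqeq
    have hEq : x * d * y = q1 * d * q2 := by rw [← heq, ← hqeq]
    have h3 : q1⁻¹ * x = d * (q2 * y⁻¹) * d⁻¹ := by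
      calc q1⁻¹ * x = q1⁻¹ * (x * d * y * (y⁻¹ * d⁻¹)) := by group
        _ = q1⁻¹ * (q1 * d * q2 * (y⁻¹ * d⁻¹)) := by rw [hEq]
        _ = d * (q2 * y⁻¹) * d⁻¹ := by group
    have hinter : q1⁻¹ * x ∈ young r (lamMinus r lam mu d) :=
      inter_eq hlam hmu hd' (mul_mem (inv_mem hq1) hx) (mul_mem hq2 (inv_mem hy)) h3
    have hg : q2 * y⁻¹ ∈ young r (muPlus r lam mu d) := by
      apply (conj_iff hlam hmu hd').2
      rw [← h3]
      exact hinter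
    have hlen1 : len q2 = len (q2 * y⁻¹) + len y := by
      conv_lhs => rw [show q2 = (q2 * y⁻¹) * y by group]
      exact len_add_left hμsum hg (min_mono_right hmin)
    have hlen2 : len y = len (q2 * y⁻¹) + len q2 := by
      conv_lhs => rw [show y = (q2 * y⁻¹)⁻¹ * q2 by group]
      rw [len_add_left hμsum (inv_mem hg) (min_mono_right hqmin), len_inv]
    have hg1 : q2 * y⁻¹ = 1 := eq_one_of_len_eq_zero (by omega)
    have hq2e : q2 = y := by rwa [mul_inv_eq_one] at hg1
    have hq1e : q1 = x := by
      rw [hq2e] at hEq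
      have h4 : x * d = q1 * d := mul_right_cancel hEq
      exact (mul_right_cancel h4).symm
    rw [Prod.mk.injEq]
    exact ⟨hq1e, hq2e⟩
  · -- part 4
    intro w hw
    obtain ⟨x, y, hx, hy, hmin, heq⟩ := exists_fact_lam hlam hmu hd' hw
    refine ⟨(x, y), ⟨hx, hy, hmin, heq⟩, ?_⟩
    rintro ⟨q1, q2⟩ ⟨hq1, hq2, hqmin, hqeq⟩
    simp only at hq1 hq2 hqmin hqeq
    have hEq : x * d * y = q1 * d * q2 := by rw [← heq, ← hqeq]
    have h3 : x⁻¹ * q1 = d * (y * q2⁻¹) * d⁻¹ := by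
      calc x⁻¹ * q1 = x⁻¹ * (q1 * d * q2 * (q2⁻¹ * d⁻¹)) := by group
        _ = x⁻¹ * (x * d * y * (q2⁻¹ * d⁻¹)) := by rw [← hEq]
        _ = d * (y * q2⁻¹) * d⁻¹ := by group
    have hinter : x⁻¹ * q1 ∈ young r (lamMinus r lam mu d) :=
      inter_eq hlam hmu hd' (mul_mem (inv_mem hx) hq1) (mul_mem hy (inv_mem hq2)) h3
    have hlen1 : len q1 = len x + len (x⁻¹ * q1) := by
      conv_lhs => rw [show q1 = x * (x⁻¹ * q1) by group]
      exact len_add_right hlsum hinter (min_mono_left hmin)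
    have hlen2 : len x = len q1 + len (x⁻¹ * q1) := by
      conv_lhs => rw [show x = q1 * (x⁻¹ * q1)⁻¹ by group]
      rw [len_add_right hlsum (inv_mem hinter) (min_mono_left hqmin), len_inv]
    have hg1 : x⁻¹ * q1 = 1 := eq_one_of_len_eq_zero (by omega)
    have hq1e : q1 = x := by
      have := hg1
      rw [inv_mul_eq_one] at this
      exact this.symm
    have hq2e : q2 = y := by
      rw [hq1e] at hEq
      exact (mul_left_cancel hEq).symm
    rw [Prod.mk.injEq]
    exact ⟨hq1e, hq2e⟩
  · -- part 5
    intro w _ x y hx hy hcase heq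
    rcases hcase with hminy | hminx
    · rw [heq]
      exact lenA3 hlam hmu hd' hx hy (min_mono_right hminy)
    · rw [heq]
      exact lenA4 hlam hmu hd' hx hy (min_mono_left hminx)
  · -- part 6
    intro w hw hlw
    obtain ⟨x, y, hx, hy, hmin, heq⟩ := exists_fact_mu hlam hmu hd' hw
    have hadd := lenA3 hlam hmu hd' hx hy (min_mono_right hmin)
    rw [heq] at hlw
    rw [hlw] at hadd
    have hx0 : len x = 0 := by omega
    have hy0 : len y = 0 := by omega
    rw [heq, eq_one_of_len_eq_zero hx0, eq_one_of_len_eq_zero hy0]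
    group
end

section
/- For all natural numbers a, b, c: (i) m_{a+b,c} ∘ (m_{a,b} ⊗ id_{W_c}) = m_{a,b+c} ∘ (id_{W_a} ⊗ m_{b,c}) as K-linear maps W_a ⊗ W_b ⊗ W_c → W_{a+b+c}; and (ii) (δ_{a,b} ⊗ id_{W_c}) ∘ δ_{a+b,c} = (id_{W_a} ⊗ δ_{b,c}) ∘ δ_{a,b+c} as K-linear maps W_{a+b+c} → W_a ⊗ W_b ⊗ W_c. (These are the associativity and coassociativity relations (asscoassoc) of Theorem A, realized on quantum exterior powers via the functor Σ_n of Theorem C.) -/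
open scoped BigOperators
open TensorProduct

/-- `W n r` is the free `ℚ(q)`-module with basis `{v_I : I ⊆ {1,…,n}, |I| = r}`,
realizing the `r`-th quantum exterior power of the natural module of quantum `GL_n`. -/
abbrev W (n r : ℕ) : Type := {I : Finset (Fin n) // I.card = r} →₀ RatFunc ℚ

/-- The basis vector `v_I` of `W n r`. -/
noncomputable def v {n r : ℕ} (I : {I : Finset (Fin n) // I.card = r}) : W n r :=
  Finsupp.single I 1

/-- `inv(I,J) = #{(i,j) ∈ I × J : i > j}`. -/
def invCount {n : ℕ} (I J : Finset (Fin n)) : ℕ :=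
  ((I ×ˢ J).filter fun p => p.2 < p.1).card

/-- The canonical identification `W n r ≃ W n s` for `r = s`. -/
noncomputable def castW (n : ℕ) {r s : ℕ} (h : r = s) : W n r ≃ₗ[RatFunc ℚ] W n s :=
  Finsupp.domLCongr (Equiv.subtypeEquivRight fun I => by rw [h])

/-- The merge map `m_{a,b} : W_a ⊗ W_b → W_{a+b}`,
`v_I ⊗ v_J ↦ (−q)^{inv(I,J)} v_{I∪J}` for `I ∩ J = ∅` (and `0` otherwise). -/
noncomputable def merge (n a b : ℕ) : W n a ⊗[RatFunc ℚ] W n b →ₗ[RatFunc ℚ] W n (a + b) :=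
  TensorProduct.lift <|
    Finsupp.lift (W n b →ₗ[RatFunc ℚ] W n (a + b)) (RatFunc ℚ)
      {I : Finset (Fin n) // I.card = a} fun I =>
        Finsupp.lift (W n (a + b)) (RatFunc ℚ) {J : Finset (Fin n) // J.card = b} fun J =>
          if h : Disjoint I.1 J.1 then
            ((-q) ^ invCount I.1 J.1) •
              v ⟨I.1 ∪ J.1, by rw [Finset.card_union_of_disjoint h, I.2, J.2]⟩
          else 0

/-- The split map `δ_{a,b} : W_{a+b} → W_a ⊗ W_b`,
`v_K ↦ q^{−ab} ∑_{I ⊆ K, |I| = a} (−q)^{inv(I, K∖I)} v_I ⊗ v_{K∖I}`. -/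
noncomputable def split (n a b : ℕ) : W n (a + b) →ₗ[RatFunc ℚ] W n a ⊗[RatFunc ℚ] W n b :=
  Finsupp.lift (W n a ⊗[RatFunc ℚ] W n b) (RatFunc ℚ)
    {I : Finset (Fin n) // I.card = a + b} fun Kk =>
      (q ^ (-((a : ℤ) * (b : ℤ)))) •
        ∑ I ∈ (Kk.1.powersetCard a).attach,
          ((-q) ^ invCount I.1 (Kk.1 \ I.1)) •
            (v ⟨I.1, (Finset.mem_powersetCard.mp I.2).2⟩ ⊗ₜ[RatFunc ℚ]
              v ⟨Kk.1 \ I.1, by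
                have h := Finset.mem_powersetCard.mp I.2
                rw [Finset.card_sdiff_of_subset h.1, h.2, Kk.2]; omega⟩)


section Lemmas
variable {n : ℕ}

noncomputable def vd {n r : ℕ} (I : Finset (Fin n)) : W n r :=
  if h : I.card = r then v ⟨I, h⟩ else 0

lemma vd_eq {n r : ℕ} (I : Finset (Fin n)) (h : I.card = r) : vd I = v ⟨I, h⟩ := dif_pos h

lemma v_eq_vd {n r : ℕ} (I : {I : Finset (Fin n) // I.card = r}) : v I = vd I.1 := by
  rw [vd_eq I.1 I.2]

lemma invCount_union_left {I J K : Finset (Fin n)} (h : Disjoint I J) :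
    invCount (I ∪ J) K = invCount I K + invCount J K := by
  unfold invCount
  rw [Finset.union_product, Finset.filter_union, Finset.card_union_of_disjoint]
  refine Finset.disjoint_filter_filter ?_
  rw [Finset.disjoint_left] at h ⊢
  rintro ⟨x, y⟩ hx hy
  exact h (Finset.mem_product.mp hx).1 (Finset.mem_product.mp hy).1

lemma invCount_union_right {I J K : Finset (Fin n)} (h : Disjoint J K) :
    invCount I (J ∪ K) = invCount I J + invCount I K := by
  unfold invCount
  rw [Finset.product_union, Finset.filter_union, Finset.card_union_of_disjoint]
  refine Finset.disjoint_filter_filter ?_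
  rw [Finset.disjoint_left] at h ⊢
  rintro ⟨x, y⟩ hx hy
  exact h (Finset.mem_product.mp hx).2 (Finset.mem_product.mp hy).2

lemma merge_vv (a b : ℕ) (I : {I : Finset (Fin n) // I.card = a})
    (J : {J : Finset (Fin n) // J.card = b}) :
    merge n a b (v I ⊗ₜ v J) =
      if h : Disjoint I.1 J.1 then
        ((-q) ^ invCount I.1 J.1) •
          v (⟨I.1 ∪ J.1, by rw [Finset.card_union_of_disjoint h, I.2, J.2]⟩ :
            {K : Finset (Fin n) // K.card = a + b}) else 0 := by
  simp only [merge, TensorProduct.lift.tmul, v, Finsupp.lift_apply]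
  rw [Finsupp.sum_single_index (by simp), one_smul, Finsupp.lift_apply,
    Finsupp.sum_single_index (by simp [Finsupp.sum_single_index]), one_smul]

lemma split_v (a b : ℕ) (Kk : {K : Finset (Fin n) // K.card = a + b}) :
    split n a b (v Kk) =
      (q ^ (-((a : ℤ) * (b : ℤ)))) •
        ∑ I ∈ (Kk.1.powersetCard a).attach,
          ((-q) ^ invCount I.1 (Kk.1 \ I.1)) •
            ((vd I.1 : W n a) ⊗ₜ[RatFunc ℚ] (vd (Kk.1 \ I.1) : W n b)) := by
  have : split n a b (v Kk) =
      (q ^ (-((a : ℤ) * (b : ℤ)))) •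
        ∑ I ∈ (Kk.1.powersetCard a).attach,
          ((-q) ^ invCount I.1 (Kk.1 \ I.1)) •
            (v ⟨I.1, (Finset.mem_powersetCard.mp I.2).2⟩ ⊗ₜ[RatFunc ℚ]
              v ⟨Kk.1 \ I.1, by
                have h := Finset.mem_powersetCard.mp I.2
                rw [Finset.card_sdiff_of_subset h.1, h.2, Kk.2]; omega⟩) := by
    simp only [split, v, Finsupp.lift_apply]
    rw [Finsupp.sum_single_index (by simp), one_smul]
  rw [this]
  simp only [v_eq_vd]

lemma castW_v {r s : ℕ} (h : r = s) (I : {I : Finset (Fin n) // I.card = r}) :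
    castW n h (v I) = vd I.1 := by
  subst h
  rw [vd_eq I.1 I.2]
  simp only [castW, v, Finsupp.domLCongr_apply, Finsupp.domCongr_apply,
    Finsupp.equivMapDomain_single]
  rfl

end Lemmas
lemma merge_tmul_smul (n a b : ℕ) (r : RatFunc ℚ) (x : W n a) (y : W n b) :
    merge n a b (x ⊗ₜ (r • y)) = r • merge n a b (x ⊗ₜ y) := by
  simp only [merge, TensorProduct.lift.tmul, map_smul]

lemma merge_smul_tmul (n a b : ℕ) (r : RatFunc ℚ) (x : W n a) (y : W n b) :
    merge n a b ((r • x) ⊗ₜ y) = r • merge n a b (x ⊗ₜ y) := by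
  rw [← TensorProduct.smul_tmul', map_smul]

lemma merge_assoc_elem (n a b c : ℕ) (I : {I : Finset (Fin n) // I.card = a})
    (J : {J : Finset (Fin n) // J.card = b}) (K : {K : Finset (Fin n) // K.card = c}) :
    merge n (a + b) c ((merge n a b (v I ⊗ₜ v J)) ⊗ₜ v K) =
      castW n (show a + (b + c) = a + b + c from (Nat.add_assoc a b c).symm)
        (merge n a (b + c) (v I ⊗ₜ merge n b c (v J ⊗ₜ v K))) := by
  by_cases hIJ : Disjoint I.1 J.1 <;> by_cases hJK : Disjoint J.1 K.1 <;>
    by_cases hIK : Disjoint I.1 K.1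
  · -- all disjoint
    have hUK : Disjoint (I.1 ∪ J.1) K.1 := Finset.disjoint_union_left.mpr ⟨hIK, hJK⟩
    have hIU : Disjoint I.1 (J.1 ∪ K.1) := Finset.disjoint_union_right.mpr ⟨hIJ, hIK⟩
    rw [merge_vv, dif_pos hIJ, merge_vv, dif_pos hJK, merge_smul_tmul, merge_tmul_smul,
      merge_vv, dif_pos hUK, merge_vv, dif_pos hIU, map_smul, map_smul, castW_v, v_eq_vd,
      smul_smul, smul_smul, ← pow_add, ← pow_add]
    congr 1
    · rw [invCount_union_left hIJ, invCount_union_right hJK]; ring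
    · exact congrArg vd (Finset.union_assoc I.1 J.1 K.1)
  · -- T T F
    simp only [merge_vv, dif_pos hIJ, dif_pos hJK, merge_smul_tmul, merge_tmul_smul,
      dif_neg (fun h => hIK (Finset.disjoint_union_left.mp h).1),
      dif_neg (fun h => hIK (Finset.disjoint_union_right.mp h).2),
      smul_zero, map_zero]
  · -- T F T
    simp only [merge_vv, dif_pos hIJ, dif_neg hJK, tmul_zero, map_zero, merge_smul_tmul,
      dif_neg (fun h => hJK (Finset.disjoint_union_left.mp h).2), smul_zero]
  · -- T F F
    simp only [merge_vv, dif_pos hIJ, dif_neg hJK, tmul_zero, map_zero, merge_smul_tmul,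
      dif_neg (fun h => hJK (Finset.disjoint_union_left.mp h).2), smul_zero]
  · -- F T T
    simp only [merge_vv, dif_neg hIJ, dif_pos hJK, zero_tmul, map_zero, merge_tmul_smul,
      dif_neg (fun h => hIJ (Finset.disjoint_union_right.mp h).1), smul_zero]
  · -- F T F
    simp only [merge_vv, dif_neg hIJ, dif_pos hJK, zero_tmul, map_zero, merge_tmul_smul,
      dif_neg (fun h => hIJ (Finset.disjoint_union_right.mp h).1), smul_zero]
  · -- F F T
    simp only [merge_vv, dif_neg hIJ, dif_neg hJK, zero_tmul, tmul_zero, map_zero]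
  · -- F F F
    simp only [merge_vv, dif_neg hIJ, dif_neg hJK, zero_tmul, tmul_zero, map_zero]

lemma part1 (n a b c : ℕ) :
    (merge n (a + b) c ∘ₗ LinearMap.rTensor (W n c) (merge n a b) =
      (castW n (show a + (b + c) = a + b + c from (Nat.add_assoc a b c).symm)).toLinearMap ∘ₗ
        merge n a (b + c) ∘ₗ LinearMap.lTensor (W n a) (merge n b c) ∘ₗ
          (TensorProduct.assoc (RatFunc ℚ) (W n a) (W n b) (W n c)).toLinearMap) := by
  ext I J K L
  simp only [LinearMap.coe_comp, Function.comp_apply,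
    TensorProduct.AlgebraTensorModule.curry_apply, TensorProduct.curry_apply,
    LinearMap.coe_restrictScalars, Finsupp.lsingle_apply, LinearMap.rTensor_tmul,
    LinearMap.lTensor_tmul, TensorProduct.assoc_tmul, LinearEquiv.coe_coe]
  exact DFunLike.congr_fun (merge_assoc_elem n a b c I J K) L
lemma split_v' (n a b : ℕ) (Kk : {K : Finset (Fin n) // K.card = a + b}) :
    split n a b (v Kk) =
      (q ^ (-((a : ℤ) * (b : ℤ)))) •
        ∑ I ∈ Kk.1.powersetCard a,
          ((-q) ^ invCount I (Kk.1 \ I)) •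
            ((vd I : W n a) ⊗ₜ[RatFunc ℚ] (vd (Kk.1 \ I) : W n b)) := by
  rw [split_v]
  congr 1
  exact Finset.sum_attach (Kk.1.powersetCard a) fun I =>
    ((-q) ^ invCount I (Kk.1 \ I)) •
      ((vd I : W n a) ⊗ₜ[RatFunc ℚ] (vd (Kk.1 \ I) : W n b))

lemma split_vd (n a b : ℕ) (M : Finset (Fin n)) (h : M.card = a + b) :
    split n a b (vd M) =
      (q ^ (-((a : ℤ) * (b : ℤ)))) •
        ∑ I ∈ M.powersetCard a,
          ((-q) ^ invCount I (M \ I)) •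
            ((vd I : W n a) ⊗ₜ[RatFunc ℚ] (vd (M \ I) : W n b)) := by
  rw [vd_eq M h, split_v' n a b ⟨M, h⟩]

lemma sum_powerset_assoc {β : Type*} [AddCommMonoid β] {α : Type*} [DecidableEq α]
    (L : Finset α) (a b : ℕ) (f : Finset α → Finset α → β) :
    ∑ M ∈ L.powersetCard (a + b), ∑ I ∈ M.powersetCard a, f M I
      = ∑ I ∈ L.powersetCard a, ∑ J ∈ (L \ I).powersetCard b, f (I ∪ J) I := by
  rw [Finset.sum_sigma' (L.powersetCard (a + b)) (fun M => M.powersetCard a)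
      (fun M I => f M I),
    Finset.sum_sigma' (L.powersetCard a) (fun I => (L \ I).powersetCard b)
      (fun I J => f (I ∪ J) I)]
  refine Finset.sum_nbij' (fun p => ⟨p.2, p.1 \ p.2⟩) (fun p => ⟨p.1 ∪ p.2, p.1⟩)
    ?_ ?_ ?_ ?_ ?_
  · rintro ⟨M, I⟩ hp
    simp only [Finset.mem_sigma, Finset.mem_powersetCard] at hp ⊢
    obtain ⟨⟨hML, hMc⟩, hIM, hIc⟩ := hp
    exact ⟨⟨hIM.trans hML, hIc⟩, Finset.sdiff_subset_sdiff hML (le_refl _),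
      by rw [Finset.card_sdiff_of_subset hIM, hMc, hIc, Nat.add_sub_cancel_left]⟩
  · rintro ⟨I, J⟩ hp
    simp only [Finset.mem_sigma, Finset.mem_powersetCard] at hp ⊢
    obtain ⟨⟨hIL, hIc⟩, hJLI, hJc⟩ := hp
    have hdisj : Disjoint I J := (Finset.sdiff_disjoint.mono_left hJLI).symm
    refine ⟨⟨Finset.union_subset hIL (hJLI.trans (Finset.sdiff_subset)), ?_⟩,
      Finset.subset_union_left, hIc⟩
    rw [Finset.card_union_of_disjoint hdisj, hIc, hJc]
  · rintro ⟨M, I⟩ hp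
    simp only [Finset.mem_sigma, Finset.mem_powersetCard] at hp
    obtain ⟨⟨hML, hMc⟩, hIM, hIc⟩ := hp
    simp [Finset.union_sdiff_of_subset hIM]
  · rintro ⟨I, J⟩ hp
    simp only [Finset.mem_sigma, Finset.mem_powersetCard] at hp
    obtain ⟨⟨hIL, hIc⟩, hJLI, hJc⟩ := hp
    have hdisj : Disjoint I J := (Finset.sdiff_disjoint.mono_left hJLI).symm
    simp [Finset.union_sdiff_cancel_left hdisj]
  · rintro ⟨M, I⟩ hp
    simp only [Finset.mem_sigma, Finset.mem_powersetCard] at hp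
    obtain ⟨⟨hML, hMc⟩, hIM, hIc⟩ := hp
    rw [Finset.union_sdiff_of_subset hIM]
lemma lhs_norm (n a b c : ℕ) (L : {L : Finset (Fin n) // L.card = (a + b) + c}) :
    LinearMap.rTensor (W n c) (split n a b) (split n (a + b) c (v L)) =
      ∑ M ∈ L.1.powersetCard (a + b), ∑ I ∈ M.powersetCard a,
        ((q ^ (-(((a + b : ℕ) : ℤ) * (c : ℤ))) * q ^ (-((a : ℤ) * (b : ℤ)))) *
            (-q) ^ (invCount M (L.1 \ M) + invCount I (M \ I))) •
          (((vd I : W n a) ⊗ₜ[RatFunc ℚ] (vd (M \ I) : W n b)) ⊗ₜ[RatFunc ℚ]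
            (vd (L.1 \ M) : W n c)) := by
  rw [split_v', map_smul, map_sum, Finset.smul_sum]
  refine Finset.sum_congr rfl fun M hM => ?_
  have hMc : M.card = a + b := (Finset.mem_powersetCard.mp hM).2
  rw [map_smul, LinearMap.rTensor_tmul, split_vd n a b M hMc, ← TensorProduct.smul_tmul',
    TensorProduct.sum_tmul, Finset.smul_sum, Finset.smul_sum, Finset.smul_sum]
  refine Finset.sum_congr rfl fun I hI => ?_
  rw [← TensorProduct.smul_tmul', smul_smul, smul_smul, smul_smul, pow_add]
  ring_nf
set_option synthInstance.maxHeartbeats 1000000 in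
lemma rhs_norm (n a b c : ℕ) (L : {L : Finset (Fin n) // L.card = a + (b + c)}) :
    (TensorProduct.assoc (RatFunc ℚ) (W n a) (W n b) (W n c)).symm
      (LinearMap.lTensor (W n a) (split n b c) (split n a (b + c) (v L))) =
      ∑ I ∈ L.1.powersetCard a, ∑ J ∈ (L.1 \ I).powersetCard b,
        ((q ^ (-((a : ℤ) * ((b + c : ℕ) : ℤ))) * q ^ (-((b : ℤ) * (c : ℤ)))) *
            (-q) ^ (invCount I (L.1 \ I) + invCount J ((L.1 \ I) \ J))) •
          (((vd I : W n a) ⊗ₜ[RatFunc ℚ] (vd J : W n b)) ⊗ₜ[RatFunc ℚ]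
            (vd ((L.1 \ I) \ J) : W n c)) := by
  rw [split_v', map_smul, map_sum, map_smul, map_sum, Finset.smul_sum]
  refine Finset.sum_congr rfl fun I hI => ?_
  have hIL : I ⊆ L.1 := (Finset.mem_powersetCard.mp hI).1
  have hIc : I.card = a := (Finset.mem_powersetCard.mp hI).2
  have hLc : (L.1 \ I).card = b + c := by
    rw [Finset.card_sdiff_of_subset hIL, L.2, hIc]; omega
  rw [map_smul, map_smul, LinearMap.lTensor_tmul, split_vd n b c _ hLc,
    TensorProduct.tmul_smul, TensorProduct.tmul_sum, map_smul, map_sum,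
    Finset.smul_sum, Finset.smul_sum, Finset.smul_sum]
  refine Finset.sum_congr rfl fun J hJ => ?_
  rw [TensorProduct.tmul_smul, map_smul, TensorProduct.assoc_symm_tmul,
    smul_smul, smul_smul, smul_smul, pow_add]
  ring_nf
lemma sdiff_sdiff_eq {α : Type*} [DecidableEq α] (L I J : Finset α) :
    (L \ I) \ J = L \ (I ∪ J) := by
  ext x; simp only [Finset.mem_sdiff, Finset.mem_union]; tauto

lemma split_coassoc_elem (n a b c : ℕ) (L : {L : Finset (Fin n) // L.card = a + b + c}) :
    LinearMap.rTensor (W n c) (split n a b) (split n (a + b) c (v L)) =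
      (TensorProduct.assoc (RatFunc ℚ) (W n a) (W n b) (W n c)).symm
        (LinearMap.lTensor (W n a) (split n b c)
          (split n a (b + c) (castW n (show a + b + c = a + (b + c) from Nat.add_assoc a b c) (v L)))) := by
  have hL' : L.1.card = a + (b + c) := by rw [L.2]; omega
  rw [castW_v, vd_eq L.1 hL', lhs_norm n a b c L, rhs_norm n a b c ⟨L.1, hL'⟩]
  refine (sum_powerset_assoc L.1 a b _).trans ?_
  refine Finset.sum_congr rfl fun I hI => Finset.sum_congr rfl fun J hJ => ?_
  obtain ⟨hIL, hIc⟩ := Finset.mem_powersetCard.mp hI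
  obtain ⟨hJLI, hJc⟩ := Finset.mem_powersetCard.mp hJ
  have hdisj : Disjoint I J := (Finset.sdiff_disjoint.mono_left hJLI).symm
  have e1 : (I ∪ J) \ I = J := Finset.union_sdiff_cancel_left hdisj
  have e2 : (L.1 \ I) \ J = L.1 \ (I ∪ J) := sdiff_sdiff_eq L.1 I J
  have h4 : invCount I (L.1 \ I) = invCount I J + invCount I ((L.1 \ I) \ J) := by
    conv_lhs => rw [← Finset.union_sdiff_of_subset hJLI]
    exact invCount_union_right Finset.disjoint_sdiff
  have h5 : invCount (I ∪ J) ((L.1 \ I) \ J)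
      = invCount I ((L.1 \ I) \ J) + invCount J ((L.1 \ I) \ J) :=
    invCount_union_left hdisj
  congr 1
  · congr 1
    · have hq : q ≠ 0 := RatFunc.X_ne_zero
      rw [← zpow_add₀ hq, ← zpow_add₀ hq]
      congr 1
      push_cast; ring
    · congr 1
      rw [e1, ← e2, h5, h4]
      ring
  · rw [e1, ← e2]
lemma part2 (n a b c : ℕ) :
    LinearMap.rTensor (W n c) (split n a b) ∘ₗ split n (a + b) c =
      (TensorProduct.assoc (RatFunc ℚ) (W n a) (W n b) (W n c)).symm.toLinearMap ∘ₗ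
        LinearMap.lTensor (W n a) (split n b c) ∘ₗ split n a (b + c) ∘ₗ
          (castW n (show a + b + c = a + (b + c) from Nat.add_assoc a b c)).toLinearMap := by
  ext L
  simp only [LinearMap.coe_comp, Function.comp_apply, Finsupp.lsingle_apply,
    LinearEquiv.coe_coe]
  exact split_coassoc_elem n a b c L

/-- The associativity and coassociativity relations (asscoassoc) of Theorem A, realized on
quantum exterior powers via the functor `Σ_n` of Theorem C:
(i) `m_{a+b,c} ∘ (m_{a,b} ⊗ id) = m_{a,b+c} ∘ (id ⊗ m_{b,c})` and
(ii) `(δ_{a,b} ⊗ id) ∘ δ_{a+b,c} = (id ⊗ δ_{b,c}) ∘ δ_{a,b+c}`,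
where the two sides are compared through the canonical associator of the tensor product
and the canonical identification `W_{(a+b)+c} = W_{a+(b+c)}`. -/
theorem asscoassoc (n a b c : ℕ) :
    (merge n (a + b) c ∘ₗ LinearMap.rTensor (W n c) (merge n a b) =
      (castW n (show a + (b + c) = a + b + c by omega)).toLinearMap ∘ₗ
        merge n a (b + c) ∘ₗ LinearMap.lTensor (W n a) (merge n b c) ∘ₗ
          (TensorProduct.assoc (RatFunc ℚ) (W n a) (W n b) (W n c)).toLinearMap) ∧
    (LinearMap.rTensor (W n c) (split n a b) ∘ₗ split n (a + b) c =
      (TensorProduct.assoc (RatFunc ℚ) (W n a) (W n b) (W n c)).symm.toLinearMap ∘ₗ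
        LinearMap.lTensor (W n a) (split n b c) ∘ₗ split n a (b + c) ∘ₗ
          (castW n (show a + b + c = a + (b + c) by omega)).toLinearMap) := by
  exact ⟨part1 n a b c, part2 n a b c⟩
end
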